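/- arXiv:2006.16822 — 5 statements merged into one kernel-verified Lean document; each statement's English description precedes it below -/
import Mathlib

section
/- Let d ∈ ℕ, let ρ : ℝ → ℝ be any activation function, let 𝒞 be a set of functions from (0,1)^d to ℝ, and let γ, C₁ > 0 be such that the minimax code length satisfies L_ε(𝒞) ≥ C₁·ε^{−γ} for all ε > 0. Then for each C₀ > 0 there exists a constant C > 0 (depending only on γ, C₁, C₀) such that for every coding scheme 𝓑 = (B_ℓ)_{ℓ∈ℕ} and every ε ∈ (0, 1/2) the following holds: if M ∈ ℕ is such that for every f ∈ 𝒞 there exists a neural network Φ_f with d-dimensional input and one-dimensional output, at most M nonzero weights, each nonzero weight lying in the range of B_{⌈C₀·log₂(1/ε)⌉}, and |R_ρ(Φ_f)(x) − f(x)| ≤ ε for all x ∈ (0,1)^d, then M ≥ C·ε^{−γ}/log₂(1/ε). -/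
open scoped BigOperators

/-- A feedforward neural network with input dimension `d` and `depth + 1` affine layers
(`A ℓ`, `b ℓ` for `ℓ = 0, …, depth`); the entries for `ℓ > depth` are irrelevant. -/
structure NeuralNetwork (d : ℕ) where
  depth : ℕ
  dims : ℕ → ℕ
  dims0 : dims 0 = d
  A : (ℓ : ℕ) → Matrix (Fin (dims (ℓ + 1))) (Fin (dims ℓ)) ℝ
  b : (ℓ : ℕ) → Fin (dims (ℓ + 1)) → ℝ

namespace NeuralNetwork

variable {d : ℕ}

/-- Hidden activations: `hidden ρ Φ x ℓ` is the output of layer `ℓ` (with activation). -/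
noncomputable def hidden (ρ : ℝ → ℝ) (Φ : NeuralNetwork d) (x : Fin d → ℝ) :
    (ℓ : ℕ) → Fin (Φ.dims ℓ) → ℝ
  | 0 => fun i => x (Fin.cast Φ.dims0 i)
  | ℓ + 1 => fun i => ρ ((Φ.A ℓ).mulVec (hidden ρ Φ x ℓ) i + Φ.b ℓ i)

/-- The realization `R_ρ(Φ)`: the last layer is affine (no activation). -/
noncomputable def realize (ρ : ℝ → ℝ) (Φ : NeuralNetwork d) (x : Fin d → ℝ) :
    Fin (Φ.dims (Φ.depth + 1)) → ℝ :=
  fun i => (Φ.A Φ.depth).mulVec (hidden ρ Φ x Φ.depth) i + Φ.b Φ.depth i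

/-- The realization of a network with one-dimensional output, as a scalar function. -/
noncomputable def realizeScalar (ρ : ℝ → ℝ) (Φ : NeuralNetwork d)
    (h : Φ.dims (Φ.depth + 1) = 1) (x : Fin d → ℝ) : ℝ :=
  Φ.realize ρ x (Fin.cast h.symm 0)

/-- Number of nonzero weights `M(Φ)`. -/
noncomputable def numWeights (Φ : NeuralNetwork d) : ℕ :=
  ∑ ℓ ∈ Finset.range (Φ.depth + 1),
    ((Finset.univ.filter fun p : Fin (Φ.dims (ℓ + 1)) × Fin (Φ.dims ℓ) =>
        Φ.A ℓ p.1 p.2 ≠ 0).card +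
      (Finset.univ.filter fun i : Fin (Φ.dims (ℓ + 1)) => Φ.b ℓ i ≠ 0).card)

/-- Maximum absolute value of all weights, `‖Φ‖_max`. -/
noncomputable def maxWeight (Φ : NeuralNetwork d) : ℝ :=
  sSup {r : ℝ | ∃ ℓ < Φ.depth + 1,
    (∃ i j, r = |Φ.A ℓ i j|) ∨ (∃ i, r = |Φ.b ℓ i|)}

/-- All nonzero weights of `Φ` lie in the set `S`. -/
def weightsIn (Φ : NeuralNetwork d) (S : Set ℝ) : Prop :=
  ∀ ℓ < Φ.depth + 1,
    (∀ i j, Φ.A ℓ i j ≠ 0 → Φ.A ℓ i j ∈ S) ∧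
    (∀ i, Φ.b ℓ i ≠ 0 → Φ.b ℓ i ∈ S)

end NeuralNetwork

/-- Iterated partial derivative `D^α` in the directions listed in `u` (a multi-index `α`
with `|α| = u.length`). -/
noncomputable def multiDeriv {d : ℕ} : List (Fin d) → ((Fin d → ℝ) → ℝ) → ((Fin d → ℝ) → ℝ)
  | [], f => f
  | i :: u, f => fun x => fderiv ℝ (multiDeriv u f) x (Pi.single i 1)

/-- The open unit cube `(0,1)^d`. -/
def unitCube (d : ℕ) : Set (Fin d → ℝ) := {x | ∀ i, x i ∈ Set.Ioo (0 : ℝ) 1}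

----------------------------------------------------------------
-- auxiliary canonical-form development
----------------------------------------------------------------

noncomputable def canonHidden (d N : ℕ) (ρ : ℝ → ℝ)
    (A : ℕ → Matrix (Fin (N + 1)) (Fin (N + 1)) ℝ) (b : ℕ → Fin (N + 1) → ℝ)
    (x : Fin d → ℝ) : ℕ → Fin (N + 1) → ℝ
  | 0 => fun i => if h : (i : ℕ) < d then x ⟨i, h⟩ else 0
  | t + 1 => fun i => ρ ((A t).mulVec (canonHidden d N ρ A b x t) i + b t i)

noncomputable def canonRealize (d N : ℕ) (ρ : ℝ → ℝ) (D : ℕ)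
    (A : ℕ → Matrix (Fin (N + 1)) (Fin (N + 1)) ℝ) (b : ℕ → Fin (N + 1) → ℝ)
    (x : Fin d → ℝ) : ℝ :=
  (A D).mulVec (canonHidden d N ρ A b x D) 0 + b D 0

open Classical in
noncomputable def Used {d : ℕ} (Φ : NeuralNetwork d) (ℓ : ℕ) : Finset (Fin (Φ.dims ℓ)) :=
  Finset.univ.filter (fun j => ∃ i, Φ.A ℓ i j ≠ 0)

lemma notMem_Used {d : ℕ} {Φ : NeuralNetwork d} {ℓ : ℕ} {c : Fin (Φ.dims ℓ)}
    (h : c ∉ Used Φ ℓ) (i : Fin (Φ.dims (ℓ + 1))) : Φ.A ℓ i c = 0 := by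
  classical
  by_contra hne
  exact h (by simp [Used]; exact ⟨i, hne⟩)

noncomputable def rowIdx {d : ℕ} (Φ : NeuralNetwork d) (ℓ₀ D N : ℕ)
    (hcast : Φ.dims (ℓ₀ + D + 1) = 1) (t : ℕ) (i : Fin (N + 1)) :
    Option (Fin (Φ.dims (ℓ₀ + t + 1))) :=
  if htD : t < D then
    (if h : (i : ℕ) < (Used Φ (ℓ₀ + t + 1)).card then
      some ((Used Φ (ℓ₀ + t + 1)).orderIsoOfFin rfl ⟨i, h⟩) else none)
  else if htD' : t = D then
    (if i = (0 : Fin (N + 1)) then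
      some (Fin.cast (show (1:ℕ) = Φ.dims (ℓ₀ + t + 1) by rw [htD']; exact hcast.symm)
        (0 : Fin 1)) else none)
  else none

noncomputable def colIdx {d : ℕ} (Φ : NeuralNetwork d) (ℓ₀ D N : ℕ) (t : ℕ)
    (j : Fin (N + 1)) : Option (Fin (Φ.dims (ℓ₀ + t))) :=
  if ht0 : t = 0 then
    (if hl : ℓ₀ = 0 then
      (if h : (j : ℕ) < d then
        some (Fin.cast (show d = Φ.dims (ℓ₀ + t) by rw [ht0, hl]; exact Φ.dims0.symm)
          ⟨j, h⟩) else none)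
    else none)
  else if _ : t ≤ D then
    (if h : (j : ℕ) < (Used Φ (ℓ₀ + t)).card then
      some ((Used Φ (ℓ₀ + t)).orderIsoOfFin rfl ⟨j, h⟩) else none)
  else none

noncomputable def pruneA {d : ℕ} (Φ : NeuralNetwork d) (ℓ₀ D N : ℕ)
    (hcast : Φ.dims (ℓ₀ + D + 1) = 1) : ℕ → Matrix (Fin (N + 1)) (Fin (N + 1)) ℝ :=
  fun t i j => (rowIdx Φ ℓ₀ D N hcast t i).elim 0 fun r =>
    (colIdx Φ ℓ₀ D N t j).elim 0 fun c => Φ.A (ℓ₀ + t) r c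

noncomputable def pruneB {d : ℕ} (Φ : NeuralNetwork d) (ℓ₀ D N : ℕ)
    (hcast : Φ.dims (ℓ₀ + D + 1) = 1) : ℕ → Fin (N + 1) → ℝ :=
  fun t i => (rowIdx Φ ℓ₀ D N hcast t i).elim 0 fun r => Φ.b (ℓ₀ + t) r

lemma rowIdx_some_le {d : ℕ} {Φ : NeuralNetwork d} {ℓ₀ D N : ℕ}
    {hcast : Φ.dims (ℓ₀ + D + 1) = 1} {t : ℕ} {i : Fin (N + 1)}
    {r : Fin (Φ.dims (ℓ₀ + t + 1))} (h : rowIdx Φ ℓ₀ D N hcast t i = some r) : t ≤ D := by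
  unfold rowIdx at h
  split_ifs at h with h1 h2 <;> omega

lemma sum_fin_eq_sum_fin {n m : ℕ} (hm : m ≤ n) (G : ℕ → ℝ) (hG : ∀ v, m ≤ v → G v = 0) :
    ∑ j : Fin n, G j = ∑ c : Fin m, G c := by
  rw [Fin.sum_univ_eq_sum_range, Fin.sum_univ_eq_sum_range]
  exact (Finset.sum_subset (Finset.range_subset_range.mpr hm)
    (fun v _ hv => hG v (by simpa using hv))).symm

lemma sum_used {d : ℕ} {Φ : NeuralNetwork d} (ℓ : ℕ) (f : Fin (Φ.dims ℓ) → ℝ) :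
    ∑ c ∈ Used Φ ℓ, f c
      = ∑ v : Fin ((Used Φ ℓ).card), f ((Used Φ ℓ).orderIsoOfFin rfl v) := by
  rw [← Finset.sum_coe_sort (Used Φ ℓ) f]
  exact (Fintype.sum_equiv ((Used Φ ℓ).orderIsoOfFin rfl).toEquiv _ _ (fun v => rfl)).symm

lemma prune_mulVec {d : ℕ} (ρ : ℝ → ℝ) (Φ : NeuralNetwork d) (ℓ₀ D N : ℕ)
    (hcast : Φ.dims (ℓ₀ + D + 1) = 1)
    (hU0 : 1 ≤ ℓ₀ → Used Φ ℓ₀ = ∅)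
    (hdN : d ≤ N + 1)
    (hcard : ∀ s, 1 ≤ s → s ≤ D → (Used Φ (ℓ₀ + s)).card ≤ N + 1)
    (x : Fin d → ℝ) (t : ℕ) (htD : t ≤ D)
    (ih : ∀ (j : Fin (N + 1)) (h : (j : ℕ) < (Used Φ (ℓ₀ + t)).card), 1 ≤ t →
      canonHidden d N ρ (pruneA Φ ℓ₀ D N hcast) (pruneB Φ ℓ₀ D N hcast) x t j
        = Φ.hidden ρ x (ℓ₀ + t) ((Used Φ (ℓ₀ + t)).orderIsoOfFin rfl ⟨j, h⟩))
    (i : Fin (N + 1)) (r : Fin (Φ.dims (ℓ₀ + t + 1)))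
    (hri : rowIdx Φ ℓ₀ D N hcast t i = some r) :
    (pruneA Φ ℓ₀ D N hcast t).mulVec
        (canonHidden d N ρ (pruneA Φ ℓ₀ D N hcast) (pruneB Φ ℓ₀ D N hcast) x t) i
      = (Φ.A (ℓ₀ + t)).mulVec (Φ.hidden ρ x (ℓ₀ + t)) r := by
  classical
  simp only [Matrix.mulVec, dotProduct, pruneA, hri, Option.elim_some]
  rcases Nat.eq_zero_or_pos t with rfl | ht1
  · by_cases hl : ℓ₀ = 0
    · subst hl
      set G : ℕ → ℝ := fun v =>
        if h : v < d then
          Φ.A (0 + 0) r (Fin.cast (Φ.dims0.symm : d = Φ.dims (0 + 0)) ⟨v, h⟩) * x ⟨v, h⟩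
        else 0 with hG
      have hL : ∀ j : Fin (N + 1),
          (colIdx Φ 0 D N 0 j).elim 0 (fun c => Φ.A (0 + 0) r c) *
            canonHidden d N ρ (pruneA Φ 0 D N hcast) (pruneB Φ 0 D N hcast) x 0 j
            = G (j : ℕ) := by
        intro j
        show (colIdx Φ 0 D N 0 j).elim 0 (fun c => Φ.A (0 + 0) r c) *
            (if h : (j : ℕ) < d then x ⟨j, h⟩ else 0) = G (j : ℕ)
        unfold colIdx
        by_cases hjd : (j : ℕ) < d
        · rw [dif_pos rfl, dif_pos rfl, dif_pos hjd, Option.elim_some, hG]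
          beta_reduce; simp only [dif_pos hjd]; try rfl
        · rw [dif_pos rfl, dif_pos rfl, dif_neg hjd, Option.elim_none, zero_mul]
          rw [hG]; beta_reduce; simp only [dif_neg hjd]; try rfl
      have hR : ∀ c : Fin (Φ.dims (0 + 0)),
          Φ.A (0 + 0) r c * Φ.hidden ρ x (0 + 0) c = G (c : ℕ) := by
        intro c
        have hc : (c : ℕ) < d := by
          have h2 := c.isLt
          simpa [show Φ.dims (0 + 0) = d from Φ.dims0] using h2
        show Φ.A (0 + 0) r c * x (Fin.cast Φ.dims0 c) = G (c : ℕ)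
        rw [hG]; beta_reduce; simp only [dif_pos hc]; try rfl
      have hm : Φ.dims (0 + 0) ≤ N + 1 := by
        rw [show Φ.dims (0 + 0) = d from Φ.dims0]; exact hdN
      have hvan : ∀ v, Φ.dims (0 + 0) ≤ v → G v = 0 := by
        intro v hv
        have : ¬ v < d := by
          rw [show Φ.dims (0 + 0) = d from Φ.dims0] at hv; omega
        rw [hG]; beta_reduce; simp only [dif_neg this]; try rfl
      rw [Finset.sum_congr rfl (fun j _ => hL j), Finset.sum_congr rfl (fun c _ => hR c)]
      exact sum_fin_eq_sum_fin hm G hvan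
    · have hU : Used Φ ℓ₀ = ∅ := hU0 (by omega)
      have hL : ∀ j : Fin (N + 1),
          (colIdx Φ ℓ₀ D N 0 j).elim 0 (fun c => Φ.A (ℓ₀ + 0) r c) *
            canonHidden d N ρ (pruneA Φ ℓ₀ D N hcast) (pruneB Φ ℓ₀ D N hcast) x 0 j
            = (0 : ℝ) := by
        intro j
        unfold colIdx
        rw [dif_pos rfl, dif_neg hl, Option.elim_none, zero_mul]
      have hR : ∀ c : Fin (Φ.dims (ℓ₀ + 0)),
          Φ.A (ℓ₀ + 0) r c * Φ.hidden ρ x (ℓ₀ + 0) c = (0 : ℝ) := by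
        intro c
        have hc : c ∉ Used Φ ℓ₀ := by rw [hU]; exact Finset.notMem_empty c
        have h0 : Φ.A (ℓ₀ + 0) r c = 0 := notMem_Used hc r
        rw [h0, zero_mul]
      rw [Finset.sum_congr rfl (fun j _ => hL j), Finset.sum_congr rfl (fun c _ => hR c)]
      simp
  · have ht0 : t ≠ 0 := by omega
    have hm : (Used Φ (ℓ₀ + t)).card ≤ N + 1 := hcard t ht1 htD
    set e := (Used Φ (ℓ₀ + t)).orderIsoOfFin rfl with he
    set G : ℕ → ℝ := fun v =>
      if h : v < (Used Φ (ℓ₀ + t)).card then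
        Φ.A (ℓ₀ + t) r (e ⟨v, h⟩) * Φ.hidden ρ x (ℓ₀ + t) (e ⟨v, h⟩)
      else 0 with hG
    have hL : ∀ j : Fin (N + 1),
        (colIdx Φ ℓ₀ D N t j).elim 0 (fun c => Φ.A (ℓ₀ + t) r c) *
          canonHidden d N ρ (pruneA Φ ℓ₀ D N hcast) (pruneB Φ ℓ₀ D N hcast) x t j
          = G (j : ℕ) := by
      intro j
      unfold colIdx
      rw [dif_neg ht0, dif_pos htD]
      by_cases hj : (j : ℕ) < (Used Φ (ℓ₀ + t)).card
      · rw [dif_pos hj, Option.elim_some, ih j hj ht1]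
        rw [hG, he]; beta_reduce; simp only [dif_pos hj]; try rfl
      · rw [dif_neg hj, Option.elim_none, zero_mul]
        rw [hG]; beta_reduce; simp only [dif_neg hj]; try rfl
    have hsub : ∑ c : Fin (Φ.dims (ℓ₀ + t)), Φ.A (ℓ₀ + t) r c * Φ.hidden ρ x (ℓ₀ + t) c
        = ∑ c ∈ Used Φ (ℓ₀ + t), Φ.A (ℓ₀ + t) r c * Φ.hidden ρ x (ℓ₀ + t) c := by
      refine (Finset.sum_subset (Finset.subset_univ _) ?_).symm
      intro c _ hc
      rw [notMem_Used hc r, zero_mul]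
    rw [Finset.sum_congr rfl (fun j _ => hL j), hsub, sum_used,
      sum_fin_eq_sum_fin hm G (fun v hv => by rw [hG]; beta_reduce; simp only [dif_neg (Nat.not_lt.mpr hv)]; try rfl)]
    refine Finset.sum_congr rfl (fun v _ => ?_)
    rw [hG, he]; beta_reduce; simp only [dif_pos v.isLt, Fin.eta]; try rfl

lemma prune_hidden {d : ℕ} (ρ : ℝ → ℝ) (Φ : NeuralNetwork d) (ℓ₀ D N : ℕ)
    (hcast : Φ.dims (ℓ₀ + D + 1) = 1)
    (hU0 : 1 ≤ ℓ₀ → Used Φ ℓ₀ = ∅) (hdN : d ≤ N + 1)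
    (hcard : ∀ s, 1 ≤ s → s ≤ D → (Used Φ (ℓ₀ + s)).card ≤ N + 1)
    (x : Fin d → ℝ) :
    ∀ t, t ≤ D → ∀ (j : Fin (N + 1)) (h : (j : ℕ) < (Used Φ (ℓ₀ + t)).card), 1 ≤ t →
      canonHidden d N ρ (pruneA Φ ℓ₀ D N hcast) (pruneB Φ ℓ₀ D N hcast) x t j
        = Φ.hidden ρ x (ℓ₀ + t) ((Used Φ (ℓ₀ + t)).orderIsoOfFin rfl ⟨j, h⟩) := by
  intro t
  induction t with
  | zero => intro _ j h h1; omega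
  | succ t IH =>
    intro htD j h _
    have htD' : t < D := by omega
    have h' : (j : ℕ) < (Used Φ (ℓ₀ + t + 1)).card := h
    have hrow : rowIdx Φ ℓ₀ D N hcast t j
        = some (((Used Φ (ℓ₀ + t + 1)).orderIsoOfFin rfl ⟨j, h'⟩ :
            {y // y ∈ Used Φ (ℓ₀ + t + 1)}) : Fin (Φ.dims (ℓ₀ + t + 1))) := by
      unfold rowIdx
      rw [dif_pos htD', dif_pos h']
    have hmv := prune_mulVec ρ Φ ℓ₀ D N hcast hU0 hdN hcard x t (le_of_lt htD')
      (fun j h h1 => IH (le_of_lt htD') j h h1) j _ hrow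
    show ρ ((pruneA Φ ℓ₀ D N hcast t).mulVec
        (canonHidden d N ρ (pruneA Φ ℓ₀ D N hcast) (pruneB Φ ℓ₀ D N hcast) x t) j
        + pruneB Φ ℓ₀ D N hcast t j)
      = ρ ((Φ.A (ℓ₀ + t)).mulVec (Φ.hidden ρ x (ℓ₀ + t))
            (((Used Φ (ℓ₀ + t + 1)).orderIsoOfFin rfl ⟨j, h'⟩ :
              {y // y ∈ Used Φ (ℓ₀ + t + 1)}) : Fin (Φ.dims (ℓ₀ + t + 1)))
          + Φ.b (ℓ₀ + t) (((Used Φ (ℓ₀ + t + 1)).orderIsoOfFin rfl ⟨j, h'⟩ :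
              {y // y ∈ Used Φ (ℓ₀ + t + 1)}) : Fin (Φ.dims (ℓ₀ + t + 1))))
    rw [hmv]
    congr 1
    unfold pruneB
    rw [hrow, Option.elim_some]

lemma realizeScalar_eq {d : ℕ} (ρ : ℝ → ℝ) (Φ : NeuralNetwork d)
    (hout : Φ.dims (Φ.depth + 1) = 1) (x : Fin d → ℝ) (u : ℕ) (hu : u = Φ.depth)
    (hu1 : Φ.dims (u + 1) = 1) :
    Φ.realizeScalar ρ hout x
      = (Φ.A u).mulVec (Φ.hidden ρ x u) (Fin.cast hu1.symm 0)
        + Φ.b u (Fin.cast hu1.symm 0) := by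
  subst hu
  rfl

lemma prune_realize {d : ℕ} (ρ : ℝ → ℝ) (Φ : NeuralNetwork d) (ℓ₀ D N : ℕ)
    (hdep : ℓ₀ + D = Φ.depth)
    (hout : Φ.dims (Φ.depth + 1) = 1)
    (hcast : Φ.dims (ℓ₀ + D + 1) = 1)
    (hU0 : 1 ≤ ℓ₀ → Used Φ ℓ₀ = ∅) (hdN : d ≤ N + 1)
    (hcard : ∀ s, 1 ≤ s → s ≤ D → (Used Φ (ℓ₀ + s)).card ≤ N + 1)
    (x : Fin d → ℝ) :
    canonRealize d N ρ D (pruneA Φ ℓ₀ D N hcast) (pruneB Φ ℓ₀ D N hcast) x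
      = Φ.realizeScalar ρ hout x := by
  have hrow : rowIdx Φ ℓ₀ D N hcast D (0 : Fin (N + 1))
      = some (Fin.cast (show (1 : ℕ) = Φ.dims (ℓ₀ + D + 1) from hcast.symm) (0 : Fin 1)) := by
    unfold rowIdx
    rw [dif_neg (lt_irrefl D), dif_pos rfl, if_pos rfl]
  have hmv := prune_mulVec ρ Φ ℓ₀ D N hcast hU0 hdN hcard x D le_rfl
    (fun j h h1 => prune_hidden ρ Φ ℓ₀ D N hcast hU0 hdN hcard x D le_rfl j h h1)
    0 _ hrow
  rw [realizeScalar_eq ρ Φ hout x (ℓ₀ + D) hdep hcast]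
  show (pruneA Φ ℓ₀ D N hcast D).mulVec
      (canonHidden d N ρ (pruneA Φ ℓ₀ D N hcast) (pruneB Φ ℓ₀ D N hcast) x D) 0
      + pruneB Φ ℓ₀ D N hcast D 0 = _
  rw [hmv]
  congr 1
  unfold pruneB
  rw [hrow, Option.elim_some]

noncomputable def toW (M N : ℕ) (A : ℕ → Matrix (Fin (N + 1)) (Fin (N + 1)) ℝ)
    (b : ℕ → Fin (N + 1) → ℝ) (p : Fin (M + 1) × Fin (N + 1) × Fin (N + 2)) : ℝ :=
  if h : (p.2.2 : ℕ) < N + 1 then A p.1 p.2.1 ⟨p.2.2, h⟩ else b p.1 p.2.1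

lemma card_toW (M N : ℕ) (A : ℕ → Matrix (Fin (N + 1)) (Fin (N + 1)) ℝ)
    (b : ℕ → Fin (N + 1) → ℝ) :
    (Finset.univ.filter fun p : Fin (M + 1) × Fin (N + 1) × Fin (N + 2) =>
        toW M N A b p ≠ 0).card
      = ∑ t : Fin (M + 1),
          ((Finset.univ.filter fun q : Fin (N + 1) × Fin (N + 1) =>
              A t q.1 q.2 ≠ 0).card
            + (Finset.univ.filter fun i : Fin (N + 1) => b t i ≠ 0).card) := by
  classical
  rw [Finset.card_filter, Fintype.sum_prod_type]
  refine Finset.sum_congr rfl (fun t _ => ?_)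
  rw [Fintype.sum_prod_type]
  have hpt : ∀ i : Fin (N + 1),
      (∑ j : Fin (N + 2), if toW M N A b (t, i, j) ≠ 0 then 1 else 0)
        = (∑ j : Fin (N + 1), if A t i j ≠ 0 then 1 else 0)
          + (if b t i ≠ 0 then 1 else 0) := by
    intro i
    rw [Fin.sum_univ_castSucc]
    have hW1 : ∀ j : Fin (N + 1), toW M N A b (t, i, j.castSucc) = A (↑t) i j := by
      intro j
      unfold toW
      rw [dif_pos (show ((j.castSucc : Fin (N + 2)) : ℕ) < N + 1 from j.isLt)]
      rfl
    have hW2 : toW M N A b (t, i, Fin.last (N + 1)) = b (↑t) i := by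
      unfold toW
      rw [dif_neg (by simp)]
    simp only [hW1, hW2]
  rw [Finset.sum_congr rfl (fun i _ => hpt i), Finset.sum_add_distrib]
  congr 1
  · rw [Finset.card_filter, Fintype.sum_prod_type]
  · rw [Finset.card_filter]

lemma rowIdx_none {d : ℕ} (Φ : NeuralNetwork d) (ℓ₀ D N : ℕ)
    (hcast : Φ.dims (ℓ₀ + D + 1) = 1) (t : ℕ) (ht : D < t) (i : Fin (N + 1)) :
    rowIdx Φ ℓ₀ D N hcast t i = none := by
  unfold rowIdx
  rw [dif_neg (by omega : ¬ t < D), dif_neg (by omega : ¬ t = D)]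

noncomputable def rowInv {d : ℕ} (Φ : NeuralNetwork d) (ℓ₀ D N : ℕ) (t : ℕ)
    (r : Fin (Φ.dims (ℓ₀ + t + 1))) : Fin (N + 1) :=
  if t < D then
    (if h : r ∈ Used Φ (ℓ₀ + t + 1) then
      (if h2 : (Used Φ (ℓ₀ + t + 1)).card ≤ N + 1 then
        Fin.castLE h2 (((Used Φ (ℓ₀ + t + 1)).orderIsoOfFin rfl).symm ⟨r, h⟩)
      else 0)
    else 0)
  else 0

noncomputable def colInv {d : ℕ} (Φ : NeuralNetwork d) (ℓ₀ D N : ℕ) (t : ℕ)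
    (c : Fin (Φ.dims (ℓ₀ + t))) : Fin (N + 1) :=
  if t = 0 then
    (if h : (c : ℕ) < N + 1 then ⟨c, h⟩ else 0)
  else
    (if h : c ∈ Used Φ (ℓ₀ + t) then
      (if h2 : (Used Φ (ℓ₀ + t)).card ≤ N + 1 then
        Fin.castLE h2 (((Used Φ (ℓ₀ + t)).orderIsoOfFin rfl).symm ⟨c, h⟩)
      else 0)
    else 0)

lemma rowIdx_inv {d : ℕ} (Φ : NeuralNetwork d) (ℓ₀ D N : ℕ)
    (hcast : Φ.dims (ℓ₀ + D + 1) = 1) (t : ℕ) (i : Fin (N + 1))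
    (r : Fin (Φ.dims (ℓ₀ + t + 1)))
    (hr : rowIdx Φ ℓ₀ D N hcast t i = some r)
    (hc2 : t < D → (Used Φ (ℓ₀ + t + 1)).card ≤ N + 1) :
    rowInv Φ ℓ₀ D N t r = i := by
  unfold rowIdx at hr
  by_cases htD : t < D
  · rw [dif_pos htD] at hr
    by_cases h : (i : ℕ) < (Used Φ (ℓ₀ + t + 1)).card
    · rw [dif_pos h] at hr
      have hreq : (((Used Φ (ℓ₀ + t + 1)).orderIsoOfFin rfl ⟨i, h⟩ :
          {y // y ∈ Used Φ (ℓ₀ + t + 1)}) : Fin (Φ.dims (ℓ₀ + t + 1))) = r :=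
        Option.some.inj hr
      subst hreq
      unfold rowInv
      rw [if_pos htD, dif_pos (Finset.coe_mem _), dif_pos (hc2 htD)]
      have e2 : (⟨(((Used Φ (ℓ₀ + t + 1)).orderIsoOfFin rfl ⟨i, h⟩ :
            {y // y ∈ Used Φ (ℓ₀ + t + 1)}) : Fin (Φ.dims (ℓ₀ + t + 1))),
            Finset.coe_mem _⟩ : {y // y ∈ Used Φ (ℓ₀ + t + 1)})
          = (Used Φ (ℓ₀ + t + 1)).orderIsoOfFin rfl ⟨i, h⟩ := Subtype.ext rfl
      rw [e2, OrderIso.symm_apply_apply]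
      rfl
    · rw [dif_neg h] at hr
      exact absurd hr (by simp)
  · rw [dif_neg htD] at hr
    by_cases htD' : t = D
    · rw [dif_pos htD'] at hr
      by_cases hi : i = 0
      · unfold rowInv
        rw [if_neg htD]
        exact hi.symm
      · rw [if_neg hi] at hr
        exact absurd hr (by simp)
    · rw [dif_neg htD'] at hr
      exact absurd hr (by simp)

lemma colIdx_inv {d : ℕ} (Φ : NeuralNetwork d) (ℓ₀ D N : ℕ) (t : ℕ) (j : Fin (N + 1))
    (c : Fin (Φ.dims (ℓ₀ + t)))
    (hc : colIdx Φ ℓ₀ D N t j = some c)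
    (hc2 : 1 ≤ t → (Used Φ (ℓ₀ + t)).card ≤ N + 1)
    (hdN : d ≤ N + 1) :
    colInv Φ ℓ₀ D N t c = j := by
  unfold colIdx at hc
  by_cases ht0 : t = 0
  · subst ht0
    rw [dif_pos rfl] at hc
    by_cases hl : ℓ₀ = 0
    · rw [dif_pos hl] at hc
      by_cases hjd : (j : ℕ) < d
      · rw [dif_pos hjd] at hc
        have hceq : Fin.cast (show d = Φ.dims (ℓ₀ + 0) by rw [hl]; exact Φ.dims0.symm)
            (⟨j, hjd⟩ : Fin d) = c := Option.some.inj hc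
        subst hceq
        unfold colInv
        rw [if_pos rfl]
        split_ifs with hh
        · exact Fin.ext rfl
        · exact absurd j.isLt hh
      · rw [dif_neg hjd] at hc
        exact absurd hc (by simp)
    · rw [dif_neg hl] at hc
      exact absurd hc (by simp)
  · rw [dif_neg ht0] at hc
    by_cases htD : t ≤ D
    · rw [dif_pos htD] at hc
      by_cases h : (j : ℕ) < (Used Φ (ℓ₀ + t)).card
      · rw [dif_pos h] at hc
        have hceq : (((Used Φ (ℓ₀ + t)).orderIsoOfFin rfl ⟨j, h⟩ :
            {y // y ∈ Used Φ (ℓ₀ + t)}) : Fin (Φ.dims (ℓ₀ + t))) = c :=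
          Option.some.inj hc
        subst hceq
        unfold colInv
        rw [if_neg ht0, dif_pos (Finset.coe_mem _), dif_pos (hc2 (by omega))]
        have e2 : (⟨(((Used Φ (ℓ₀ + t)).orderIsoOfFin rfl ⟨j, h⟩ :
              {y // y ∈ Used Φ (ℓ₀ + t)}) : Fin (Φ.dims (ℓ₀ + t))),
              Finset.coe_mem _⟩ : {y // y ∈ Used Φ (ℓ₀ + t)})
            = (Used Φ (ℓ₀ + t)).orderIsoOfFin rfl ⟨j, h⟩ := Subtype.ext rfl
        rw [e2, OrderIso.symm_apply_apply]
        rfl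
      · rw [dif_neg h] at hc
        exact absurd hc (by simp)
    · rw [dif_neg htD] at hc
      exact absurd hc (by simp)

lemma pruneA_card_le {d : ℕ} (Φ : NeuralNetwork d) (ℓ₀ D N : ℕ)
    (hcast : Φ.dims (ℓ₀ + D + 1) = 1) (t : ℕ) (htD : t ≤ D) (hdN : d ≤ N + 1)
    (hcard : ∀ s, 1 ≤ s → s ≤ D → (Used Φ (ℓ₀ + s)).card ≤ N + 1) :
    (Finset.univ.filter fun q : Fin (N + 1) × Fin (N + 1) =>
        pruneA Φ ℓ₀ D N hcast t q.1 q.2 ≠ 0).card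
      ≤ (Finset.univ.filter fun p : Fin (Φ.dims (ℓ₀ + t + 1)) × Fin (Φ.dims (ℓ₀ + t)) =>
          Φ.A (ℓ₀ + t) p.1 p.2 ≠ 0).card := by
  classical
  apply Finset.card_le_card_of_surjOn
    (fun p => (rowInv Φ ℓ₀ D N t p.1, colInv Φ ℓ₀ D N t p.2))
  intro q hq
  simp only [Finset.coe_filter, Set.mem_setOf_eq, Finset.mem_univ, true_and] at hq
  unfold pruneA at hq
  cases hr : rowIdx Φ ℓ₀ D N hcast t q.1 with
  | none => rw [hr] at hq; simp at hq
  | some r =>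
    cases hc : colIdx Φ ℓ₀ D N t q.2 with
    | none => rw [hr, hc] at hq; simp at hq
    | some c =>
      rw [hr, hc] at hq
      simp only [Option.elim_some] at hq
      refine ⟨(r, c), ?_, ?_⟩
      · simp only [Finset.coe_filter, Set.mem_setOf_eq, Finset.mem_univ, true_and]
        exact hq
      · have h1 : rowInv Φ ℓ₀ D N t r = q.1 :=
          rowIdx_inv Φ ℓ₀ D N hcast t q.1 r hr
            (fun hlt => hcard (t + 1) (by omega) (by omega))
        have h2 : colInv Φ ℓ₀ D N t c = q.2 :=
          colIdx_inv Φ ℓ₀ D N t q.2 c hc (fun h1t => hcard t h1t htD) hdN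
        exact Prod.ext h1 h2

lemma pruneB_card_le {d : ℕ} (Φ : NeuralNetwork d) (ℓ₀ D N : ℕ)
    (hcast : Φ.dims (ℓ₀ + D + 1) = 1) (t : ℕ) (htD : t ≤ D) (hdN : d ≤ N + 1)
    (hcard : ∀ s, 1 ≤ s → s ≤ D → (Used Φ (ℓ₀ + s)).card ≤ N + 1) :
    (Finset.univ.filter fun i : Fin (N + 1) =>
        pruneB Φ ℓ₀ D N hcast t i ≠ 0).card
      ≤ (Finset.univ.filter fun r : Fin (Φ.dims (ℓ₀ + t + 1)) =>
          Φ.b (ℓ₀ + t) r ≠ 0).card := by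
  classical
  apply Finset.card_le_card_of_surjOn (fun r => rowInv Φ ℓ₀ D N t r)
  intro i hi
  simp only [Finset.coe_filter, Set.mem_setOf_eq, Finset.mem_univ, true_and] at hi
  unfold pruneB at hi
  cases hr : rowIdx Φ ℓ₀ D N hcast t i with
  | none => rw [hr] at hi; simp at hi
  | some r =>
    rw [hr] at hi
    simp only [Option.elim_some] at hi
    refine ⟨r, ?_, ?_⟩
    · simp only [Finset.coe_filter, Set.mem_setOf_eq, Finset.mem_univ, true_and]
      exact hi
    · exact rowIdx_inv Φ ℓ₀ D N hcast t i r hr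
        (fun hlt => hcard (t + 1) (by omega) (by omega))

lemma prune_card {d : ℕ} (Φ : NeuralNetwork d) (ℓ₀ D N M : ℕ)
    (hcast : Φ.dims (ℓ₀ + D + 1) = 1) (hDM : D ≤ M)
    (hdep : ℓ₀ + D = Φ.depth) (hdN : d ≤ N + 1)
    (hcard : ∀ s, 1 ≤ s → s ≤ D → (Used Φ (ℓ₀ + s)).card ≤ N + 1) :
    (Finset.univ.filter fun p : Fin (M + 1) × Fin (N + 1) × Fin (N + 2) =>
        toW M N (pruneA Φ ℓ₀ D N hcast) (pruneB Φ ℓ₀ D N hcast) p ≠ 0).card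
      ≤ Φ.numWeights := by
  classical
  rw [card_toW]
  set w : ℕ → ℕ := fun u =>
    ((Finset.univ.filter fun p : Fin (Φ.dims (u + 1)) × Fin (Φ.dims u) =>
        Φ.A u p.1 p.2 ≠ 0).card
      + (Finset.univ.filter fun i : Fin (Φ.dims (u + 1)) => Φ.b u i ≠ 0).card) with hw
  set g : ℕ → ℕ := fun u => if u ≤ D then w (ℓ₀ + u) else 0 with hg
  have hstep : ∀ t : Fin (M + 1),
      ((Finset.univ.filter fun q : Fin (N + 1) × Fin (N + 1) =>
          pruneA Φ ℓ₀ D N hcast t q.1 q.2 ≠ 0).card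
        + (Finset.univ.filter fun i : Fin (N + 1) =>
            pruneB Φ ℓ₀ D N hcast t i ≠ 0).card) ≤ g (t : ℕ) := by
    intro t
    by_cases htD : (t : ℕ) ≤ D
    · rw [hg]
      beta_reduce
      rw [if_pos htD, hw]
      exact add_le_add (pruneA_card_le Φ ℓ₀ D N hcast t htD hdN hcard)
        (pruneB_card_le Φ ℓ₀ D N hcast t htD hdN hcard)
    · have hz1 : ∀ (i j : Fin (N + 1)), pruneA Φ ℓ₀ D N hcast t i j = 0 := by
        intro i j
        unfold pruneA
        rw [rowIdx_none Φ ℓ₀ D N hcast t (by omega) i, Option.elim_none]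
      have hz2 : ∀ i : Fin (N + 1), pruneB Φ ℓ₀ D N hcast t i = 0 := by
        intro i
        unfold pruneB
        rw [rowIdx_none Φ ℓ₀ D N hcast t (by omega) i, Option.elim_none]
      rw [hg]
      beta_reduce
      rw [if_neg htD]
      simp [hz1, hz2]
  calc ∑ t : Fin (M + 1),
        ((Finset.univ.filter fun q : Fin (N + 1) × Fin (N + 1) =>
            pruneA Φ ℓ₀ D N hcast t q.1 q.2 ≠ 0).card
          + (Finset.univ.filter fun i : Fin (N + 1) =>
              pruneB Φ ℓ₀ D N hcast t i ≠ 0).card)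
      ≤ ∑ t : Fin (M + 1), g (t : ℕ) :=
        Finset.sum_le_sum (fun t _ => hstep t)
    _ = ∑ u ∈ Finset.range (M + 1), g u := by
        rw [Fin.sum_univ_eq_sum_range]
    _ = ∑ u ∈ Finset.range (D + 1), g u := by
        refine (Finset.sum_subset (Finset.range_subset_range.mpr (by omega)) ?_).symm
        intro u _ hu
        rw [hg]
        beta_reduce
        rw [if_neg (by simp at hu; omega)]
    _ = ∑ u ∈ Finset.range (D + 1), w (ℓ₀ + u) := by
        refine Finset.sum_congr rfl (fun u hu => ?_)
        rw [hg]
        beta_reduce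
        rw [if_pos (by simp at hu; omega)]
    _ = ∑ ℓ ∈ Finset.Ico ℓ₀ (ℓ₀ + D + 1), w ℓ := by
        rw [Finset.sum_Ico_eq_sum_range, show ℓ₀ + D + 1 - ℓ₀ = D + 1 by omega]
    _ ≤ ∑ ℓ ∈ Finset.range (Φ.depth + 1), w ℓ := by
        apply Finset.sum_le_sum_of_subset
        intro ℓ hℓ
        simp only [Finset.mem_Ico] at hℓ
        simp only [Finset.mem_range]
        omega
    _ = Φ.numWeights := rfl

lemma pruneA_mem {d : ℕ} (Φ : NeuralNetwork d) (ℓ₀ D N : ℕ)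
    (hcast : Φ.dims (ℓ₀ + D + 1) = 1) (hdep : ℓ₀ + D = Φ.depth) (S : Set ℝ)
    (hS : Φ.weightsIn S) (t : ℕ) (i j : Fin (N + 1))
    (hne : pruneA Φ ℓ₀ D N hcast t i j ≠ 0) :
    pruneA Φ ℓ₀ D N hcast t i j ∈ S := by
  unfold pruneA at *
  cases hr : rowIdx Φ ℓ₀ D N hcast t i with
  | none => rw [hr] at hne; simp at hne
  | some r =>
    cases hc : colIdx Φ ℓ₀ D N t j with
    | none => rw [hr, hc] at hne; simp at hne
    | some c =>
      rw [hr, hc] at hne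
      simp only [Option.elim_some] at hne ⊢
      have htD : t ≤ D := rowIdx_some_le hr
      exact (hS (ℓ₀ + t) (by omega)).1 r c hne

lemma pruneB_mem {d : ℕ} (Φ : NeuralNetwork d) (ℓ₀ D N : ℕ)
    (hcast : Φ.dims (ℓ₀ + D + 1) = 1) (hdep : ℓ₀ + D = Φ.depth) (S : Set ℝ)
    (hS : Φ.weightsIn S) (t : ℕ) (i : Fin (N + 1))
    (hne : pruneB Φ ℓ₀ D N hcast t i ≠ 0) :
    pruneB Φ ℓ₀ D N hcast t i ∈ S := by
  unfold pruneB at *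
  cases hr : rowIdx Φ ℓ₀ D N hcast t i with
  | none => rw [hr] at hne; simp at hne
  | some r =>
    rw [hr] at hne
    simp only [Option.elim_some] at hne ⊢
    have htD : t ≤ D := rowIdx_some_le hr
    exact (hS (ℓ₀ + t) (by omega)).2 r hne

lemma cardUsed_le {d : ℕ} (Φ : NeuralNetwork d) (ℓ : ℕ) :
    (Used Φ ℓ).card
      ≤ (Finset.univ.filter fun p : Fin (Φ.dims (ℓ + 1)) × Fin (Φ.dims ℓ) =>
          Φ.A ℓ p.1 p.2 ≠ 0).card := by
  classical
  apply Finset.card_le_card_of_surjOn (fun p => p.2)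
  intro j hj
  have hj2 : j ∈ Used Φ ℓ := hj
  unfold Used at hj2
  rw [Finset.mem_filter] at hj2
  obtain ⟨i, hi⟩ := hj2.2
  exact ⟨(i, j), by simp [hi], rfl⟩

lemma nnz_le_numWeights {d : ℕ} (Φ : NeuralNetwork d) (ℓ : ℕ) (hℓ : ℓ ≤ Φ.depth) :
    (Finset.univ.filter fun p : Fin (Φ.dims (ℓ + 1)) × Fin (Φ.dims ℓ) =>
        Φ.A ℓ p.1 p.2 ≠ 0).card ≤ Φ.numWeights := by
  classical
  calc (Finset.univ.filter fun p : Fin (Φ.dims (ℓ + 1)) × Fin (Φ.dims ℓ) =>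
        Φ.A ℓ p.1 p.2 ≠ 0).card
      ≤ ((Finset.univ.filter fun p : Fin (Φ.dims (ℓ + 1)) × Fin (Φ.dims ℓ) =>
            Φ.A ℓ p.1 p.2 ≠ 0).card
          + (Finset.univ.filter fun i : Fin (Φ.dims (ℓ + 1)) => Φ.b ℓ i ≠ 0).card) :=
        Nat.le_add_right _ _
    _ ≤ Φ.numWeights := by
        apply Finset.single_le_sum (f := fun u =>
          ((Finset.univ.filter fun p : Fin (Φ.dims (u + 1)) × Fin (Φ.dims u) =>
              Φ.A u p.1 p.2 ≠ 0).card
            + (Finset.univ.filter fun i : Fin (Φ.dims (u + 1)) => Φ.b u i ≠ 0).card))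
          (fun _ _ => Nat.zero_le _)
        simp only [Finset.mem_range]
        omega

theorem prune_main {d : ℕ} (ρ : ℝ → ℝ) (Φ : NeuralNetwork d) (M : ℕ) (S : Set ℝ)
    (hout : Φ.dims (Φ.depth + 1) = 1) (hM : Φ.numWeights ≤ M) (hS : Φ.weightsIn S) :
    ∃ (D : ℕ) (A : ℕ → Matrix (Fin (M + d + 1)) (Fin (M + d + 1)) ℝ)
      (b : ℕ → Fin (M + d + 1) → ℝ),
      D ≤ M ∧ (∀ t i j, A t i j ≠ 0 → A t i j ∈ S) ∧ (∀ t i, b t i ≠ 0 → b t i ∈ S) ∧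
      (Finset.univ.filter fun p : Fin (M + 1) × Fin (M + d + 1) × Fin (M + d + 2) =>
          toW M (M + d) A b p ≠ 0).card ≤ M ∧
      ∀ x, canonRealize d (M + d) ρ D A b x = Φ.realizeScalar ρ hout x := by
  classical
  obtain ⟨ℓ₀, hl0, hU0, hUne⟩ :
      ∃ ℓ₀, ℓ₀ ≤ Φ.depth ∧ (1 ≤ ℓ₀ → Used Φ ℓ₀ = ∅) ∧
        (∀ ℓ, ℓ₀ < ℓ → ℓ ≤ Φ.depth → (Used Φ ℓ).Nonempty) := by
    set F : Finset ℕ := (Finset.Icc 1 Φ.depth).filter (fun ℓ => Used Φ ℓ = ∅) with hF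
    by_cases hne : F.Nonempty
    · have hmem := Finset.mem_filter.mp (F.max'_mem hne)
      have hmem1 := Finset.mem_Icc.mp hmem.1
      refine ⟨F.max' hne, hmem1.2, fun _ => hmem.2, ?_⟩
      intro ℓ hl hld
      by_contra hcon
      have hemp : Used Φ ℓ = ∅ := Finset.not_nonempty_iff_eq_empty.mp hcon
      have hmem2 : ℓ ∈ F :=
        Finset.mem_filter.mpr ⟨Finset.mem_Icc.mpr ⟨by omega, hld⟩, hemp⟩
      have := F.le_max' ℓ hmem2
      omega
    · refine ⟨0, Nat.zero_le _, fun h => absurd h (by omega), ?_⟩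
      intro ℓ hl hld
      by_contra hcon
      have hemp : Used Φ ℓ = ∅ := Finset.not_nonempty_iff_eq_empty.mp hcon
      have hmem2 : ℓ ∈ F :=
        Finset.mem_filter.mpr ⟨Finset.mem_Icc.mpr ⟨by omega, hld⟩, hemp⟩
      exact hne ⟨ℓ, hmem2⟩
  obtain ⟨D, hdep⟩ : ∃ D, ℓ₀ + D = Φ.depth := ⟨Φ.depth - ℓ₀, by omega⟩
  have hcast : Φ.dims (ℓ₀ + D + 1) = 1 := by rw [hdep]; exact hout
  have hdN : d ≤ M + d + 1 := by omega
  have hcardM : ∀ ℓ, ℓ ≤ Φ.depth → (Used Φ ℓ).card ≤ M := fun ℓ hℓ =>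
    le_trans (cardUsed_le Φ ℓ) (le_trans (nnz_le_numWeights Φ ℓ hℓ) hM)
  have hcard : ∀ s, 1 ≤ s → s ≤ D → (Used Φ (ℓ₀ + s)).card ≤ M + d + 1 :=
    fun s _ hs => le_trans (hcardM (ℓ₀ + s) (by omega)) (by omega)
  have hDM : D ≤ M := by
    have h1 : (Finset.Ioc ℓ₀ Φ.depth).card = D := by rw [Nat.card_Ioc]; omega
    have h3 : ∑ ℓ ∈ Finset.Ioc ℓ₀ Φ.depth, 1
        ≤ ∑ ℓ ∈ Finset.Ioc ℓ₀ Φ.depth, (Used Φ ℓ).card := by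
      apply Finset.sum_le_sum
      intro ℓ hℓ
      simp only [Finset.mem_Ioc] at hℓ
      exact Nat.one_le_iff_ne_zero.mpr
        (Finset.card_ne_zero_of_mem (hUne ℓ hℓ.1 hℓ.2).choose_spec)
    have h4 : ∑ ℓ ∈ Finset.Ioc ℓ₀ Φ.depth, (Used Φ ℓ).card
        ≤ ∑ ℓ ∈ Finset.range (Φ.depth + 1), (Used Φ ℓ).card := by
      apply Finset.sum_le_sum_of_subset
      intro ℓ hℓ
      simp only [Finset.mem_Ioc] at hℓ
      simp only [Finset.mem_range]
      omega
    have h5 : ∑ ℓ ∈ Finset.range (Φ.depth + 1), (Used Φ ℓ).card ≤ Φ.numWeights := by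
      unfold NeuralNetwork.numWeights
      apply Finset.sum_le_sum
      intro ℓ _
      exact le_trans (cardUsed_le Φ ℓ) (Nat.le_add_right _ _)
    have h2 : ∑ ℓ ∈ Finset.Ioc ℓ₀ Φ.depth, 1 = (Finset.Ioc ℓ₀ Φ.depth).card := by
      simp
    omega
  refine ⟨D, pruneA Φ ℓ₀ D (M + d) hcast, pruneB Φ ℓ₀ D (M + d) hcast, hDM,
    (fun t i j => pruneA_mem Φ ℓ₀ D (M + d) hcast hdep S hS t i j),
    (fun t i => pruneB_mem Φ ℓ₀ D (M + d) hcast hdep S hS t i),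
    le_trans (prune_card Φ ℓ₀ D (M + d) M hcast hDM hdep hdN hcard) hM,
    (fun x => prune_realize ρ Φ ℓ₀ D (M + d) hdep hout hcast hU0 hdN hcard x)⟩

lemma sum_finset_enum {α : Type*} (s : Finset α) (f : α → ℝ) :
    ∑ c ∈ s, f c = ∑ v : Fin s.card, f (s.equivFin.symm v) := by
  rw [← Finset.sum_coe_sort s f]
  exact (Fintype.sum_equiv s.equivFin.symm
    (fun v => f (s.equivFin.symm v)) (fun u => f u) (fun v => rfl)).symm

noncomputable def decodeW (M N k : ℕ) (B : (Fin k → Bool) → ℝ)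
    (f : Fin M → Option ((Fin (M + 1) × Fin (N + 1) × Fin (N + 2)) × (Fin k → Bool)))
    (t : ℕ) (i : Fin (N + 1)) (j : Fin (N + 2)) : ℝ :=
  ∑ m : Fin M, Option.elim (f m) 0 (fun qw =>
    if (qw.1.1 : ℕ) = t ∧ qw.1.2.1 = i ∧ qw.1.2.2 = j then B qw.2 else 0)

noncomputable def decodeA (M N k : ℕ) (B : (Fin k → Bool) → ℝ)
    (f : Fin M → Option ((Fin (M + 1) × Fin (N + 1) × Fin (N + 2)) × (Fin k → Bool))) :
    ℕ → Matrix (Fin (N + 1)) (Fin (N + 1)) ℝ :=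
  fun t i j => decodeW M N k B f t i j.castSucc

noncomputable def decodeBvec (M N k : ℕ) (B : (Fin k → Bool) → ℝ)
    (f : Fin M → Option ((Fin (M + 1) × Fin (N + 1) × Fin (N + 2)) × (Fin k → Bool))) :
    ℕ → Fin (N + 1) → ℝ :=
  fun t i => decodeW M N k B f t i (Fin.last (N + 1))

lemma canonHidden_congr (d N : ℕ) (ρ : ℝ → ℝ)
    (A A' : ℕ → Matrix (Fin (N + 1)) (Fin (N + 1)) ℝ)
    (b b' : ℕ → Fin (N + 1) → ℝ) (x : Fin d → ℝ) (D : ℕ)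
    (hA : ∀ t < D, A t = A' t) (hb : ∀ t < D, b t = b' t) :
    ∀ t, t ≤ D → canonHidden d N ρ A b x t = canonHidden d N ρ A' b' x t := by
  intro t
  induction t with
  | zero => intro _; rfl
  | succ t IH =>
    intro ht
    funext i
    show ρ ((A t).mulVec (canonHidden d N ρ A b x t) i + b t i) = _
    rw [IH (by omega), hA t (by omega), hb t (by omega)]
    rfl

lemma canonRealize_congr (d N : ℕ) (ρ : ℝ → ℝ) (D : ℕ)
    (A A' : ℕ → Matrix (Fin (N + 1)) (Fin (N + 1)) ℝ)
    (b b' : ℕ → Fin (N + 1) → ℝ) (x : Fin d → ℝ)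
    (hA : ∀ t ≤ D, A t = A' t) (hb : ∀ t ≤ D, b t = b' t) :
    canonRealize d N ρ D A b x = canonRealize d N ρ D A' b' x := by
  unfold canonRealize
  rw [canonHidden_congr d N ρ A A' b b' x D (fun t ht => hA t (le_of_lt ht))
    (fun t ht => hb t (le_of_lt ht)) D le_rfl, hA D le_rfl, hb D le_rfl]

lemma decode_surj (d M k : ℕ) (B : (Fin k → Bool) → ℝ)
    (A : ℕ → Matrix (Fin (M + d + 1)) (Fin (M + d + 1)) ℝ)
    (b : ℕ → Fin (M + d + 1) → ℝ)
    (hmemA : ∀ t i j, A t i j ≠ 0 → A t i j ∈ Set.range B)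
    (hmemB : ∀ t i, b t i ≠ 0 → b t i ∈ Set.range B)
    (hcard : (Finset.univ.filter fun p : Fin (M + 1) × Fin (M + d + 1) × Fin (M + d + 2) =>
        toW M (M + d) A b p ≠ 0).card ≤ M) :
    ∃ f : Fin M → Option ((Fin (M + 1) × Fin (M + d + 1) × Fin (M + d + 2)) × (Fin k → Bool)),
      ∀ (t : Fin (M + 1)) (i : Fin (M + d + 1)) (j : Fin (M + d + 2)),
        decodeW M (M + d) k B f (t : ℕ) i j = toW M (M + d) A b (t, i, j) := by
  classical
  set P := (Finset.univ.filter fun p : Fin (M + 1) × Fin (M + d + 1) × Fin (M + d + 2) =>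
    toW M (M + d) A b p ≠ 0) with hP
  have hval : ∀ q, q ∈ P → toW M (M + d) A b q ∈ Set.range B := by
    intro q hq
    have hne : toW M (M + d) A b q ≠ 0 := (Finset.mem_filter.mp hq).2
    by_cases h : (q.2.2 : ℕ) < M + d + 1
    · unfold toW at hne ⊢
      rw [dif_pos h] at hne ⊢
      exact hmemA _ _ _ hne
    · unfold toW at hne ⊢
      rw [dif_neg h] at hne ⊢
      exact hmemB _ _ hne
  set e := P.equivFin.symm with he
  set code : Fin P.card → (Fin k → Bool) :=
    fun v => (Set.mem_range.mp (hval ((e v) : Fin (M + 1) × Fin (M + d + 1) × Fin (M + d + 2))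
      (Finset.coe_mem (e v)))).choose with hcode
  have hcode_spec : ∀ v : Fin P.card,
      B (code v) = toW M (M + d) A b ((e v) :
        Fin (M + 1) × Fin (M + d + 1) × Fin (M + d + 2)) := by
    intro v
    exact (Set.mem_range.mp (hval _ (Finset.coe_mem (e v)))).choose_spec
  refine ⟨fun m => if h : (m : ℕ) < P.card then
      some (((e ⟨m, h⟩) : Fin (M + 1) × Fin (M + d + 1) × Fin (M + d + 2)), code ⟨m, h⟩)
    else none, ?_⟩
  intro t i j
  unfold decodeW
  set G : ℕ → ℝ := fun u => if h : u < P.card then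
      (if (((e ⟨u, h⟩) : Fin (M + 1) × Fin (M + d + 1) × Fin (M + d + 2)).1 : ℕ) = (t : ℕ)
          ∧ ((e ⟨u, h⟩) : Fin (M + 1) × Fin (M + d + 1) × Fin (M + d + 2)).2.1 = i
          ∧ ((e ⟨u, h⟩) : Fin (M + 1) × Fin (M + d + 1) × Fin (M + d + 2)).2.2 = j
        then B (code ⟨u, h⟩) else 0)
    else 0 with hG
  have hpt : ∀ m : Fin M,
      Option.elim (if h : (m : ℕ) < P.card then
          some (((e ⟨m, h⟩) : Fin (M + 1) × Fin (M + d + 1) × Fin (M + d + 2)), code ⟨m, h⟩)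
        else none) 0 (fun qw =>
          if (qw.1.1 : ℕ) = (t : ℕ) ∧ qw.1.2.1 = i ∧ qw.1.2.2 = j then B qw.2 else 0)
        = G (m : ℕ) := by
    intro m
    by_cases h : (m : ℕ) < P.card
    · rw [dif_pos h, Option.elim_some, hG]
      beta_reduce
      rw [dif_pos h]
    · rw [dif_neg h, Option.elim_none, hG]
      beta_reduce
      rw [dif_neg h]
  rw [Finset.sum_congr rfl (fun m _ => hpt m),
    sum_fin_eq_sum_fin hcard G (fun v hv => by rw [hG]; beta_reduce; rw [dif_neg (by omega)])]
  have hpt2 : ∀ v : Fin P.card,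
      G (v : ℕ) = (if ((e v) : Fin (M + 1) × Fin (M + d + 1) × Fin (M + d + 2)) = (t, i, j)
        then toW M (M + d) A b (t, i, j) else 0) := by
    intro v
    rw [hG]
    beta_reduce
    rw [dif_pos v.isLt]
    have heta : (⟨(v : ℕ), v.isLt⟩ : Fin P.card) = v := rfl
    rw [heta]
    by_cases hcond : ((e v) : Fin (M + 1) × Fin (M + d + 1) × Fin (M + d + 2)) = (t, i, j)
    · rw [if_pos hcond, if_pos, hcode_spec v, hcond]
      refine ⟨?_, ?_, ?_⟩ <;> rw [hcond]
    · rw [if_neg hcond, if_neg]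
      intro hc
      apply hcond
      have h1 : ((e v) : Fin (M + 1) × Fin (M + d + 1) × Fin (M + d + 2)).1 = t :=
        Fin.ext hc.1
      exact Prod.ext h1 (Prod.ext hc.2.1 hc.2.2)
  rw [Finset.sum_congr rfl (fun v _ => hpt2 v)]
  have hsum : ∑ v : Fin P.card,
      (if ((e v) : Fin (M + 1) × Fin (M + d + 1) × Fin (M + d + 2)) = (t, i, j)
        then toW M (M + d) A b (t, i, j) else 0)
      = ∑ q ∈ P, (if q = (t, i, j) then toW M (M + d) A b (t, i, j) else 0) := by
    rw [sum_finset_enum P (fun q => if q = (t, i, j) then toW M (M + d) A b (t, i, j) else 0)]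
  rw [hsum, Finset.sum_ite_eq' P (t, i, j) (fun _ => toW M (M + d) A b (t, i, j))]
  by_cases hq : (t, i, j) ∈ P
  · rw [if_pos hq]
  · rw [if_neg hq]
    have : ¬ (toW M (M + d) A b (t, i, j) ≠ 0) := by
      intro hne
      exact hq (Finset.mem_filter.mpr ⟨Finset.mem_univ _, hne⟩)
    push_neg at this
    rw [this]

abbrev CodeT (d M k : ℕ) :=
  Fin (M + 1) × (Fin M → Option ((Fin (M + 1) × Fin (M + d + 1) × Fin (M + d + 2)) × (Fin k → Bool)))

noncomputable def decodeFun (d M k : ℕ) (ρ : ℝ → ℝ) (B : (Fin k → Bool) → ℝ)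
    (τ : CodeT d M k) : (Fin d → ℝ) → ℝ :=
  fun x => canonRealize d (M + d) ρ (τ.1 : ℕ) (decodeA M (M + d) k B τ.2)
    (decodeBvec M (M + d) k B τ.2) x

lemma card_CodeT (d M k : ℕ) :
    Fintype.card (CodeT d M k)
      = (M + 1) * ((M + 1) * ((M + d + 1) * ((M + d + 2) * 2 ^ k)) + 1) ^ M := by
  simp [Fintype.card_prod, Fintype.card_fun, Fintype.card_option, Fintype.card_fin,
    Fintype.card_bool]
  ring_nf

lemma decodeA_eq (d M k : ℕ) (B : (Fin k → Bool) → ℝ)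
    (A : ℕ → Matrix (Fin (M + d + 1)) (Fin (M + d + 1)) ℝ)
    (b : ℕ → Fin (M + d + 1) → ℝ)
    (f0 : Fin M → Option ((Fin (M + 1) × Fin (M + d + 1) × Fin (M + d + 2)) × (Fin k → Bool)))
    (hf0 : ∀ (t : Fin (M + 1)) (i : Fin (M + d + 1)) (j : Fin (M + d + 2)),
        decodeW M (M + d) k B f0 (t : ℕ) i j = toW M (M + d) A b (t, i, j))
    (t : ℕ) (ht : t ≤ M) :
    decodeA M (M + d) k B f0 t = A t ∧ decodeBvec M (M + d) k B f0 t = b t := by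
  constructor
  · funext i j
    have h1 := hf0 ⟨t, by omega⟩ i j.castSucc
    have h2 : toW M (M + d) A b (⟨t, by omega⟩, i, j.castSucc) = A t i j := by
      unfold toW
      rw [dif_pos (show ((j.castSucc : Fin (M + d + 2)) : ℕ) < M + d + 1 from j.isLt)]
      rfl
    exact h1.trans h2
  · funext i
    have h1 := hf0 ⟨t, by omega⟩ i (Fin.last (M + d + 1))
    have h2 : toW M (M + d) A b (⟨t, by omega⟩, i, Fin.last (M + d + 1)) = b t i := by
      unfold toW
      rw [dif_neg (by simp)]
    exact h1.trans h2

lemma clog_le_logb (n : ℕ) (hn : 1 ≤ n) :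
    (Nat.clog 2 n : ℝ) ≤ Real.logb 2 n + 1 := by
  rcases eq_or_lt_of_le hn with h1 | h2
  · rw [← h1]
    simp
  · have hpow := Nat.pow_pred_clog_lt_self (b := 2) (by norm_num) h2
    have hc1 : 1 ≤ Nat.clog 2 n := Nat.clog_pos (by norm_num) h2
    have hr : (2 : ℝ) ^ (Nat.clog 2 n - 1 : ℕ) ≤ (n : ℝ) := by
      exact_mod_cast hpow.le
    have hlog : ((Nat.clog 2 n - 1 : ℕ) : ℝ) ≤ Real.logb 2 n := by
      have hmono := (Real.logb_le_logb (b := 2) (x := (2 : ℝ) ^ (Nat.clog 2 n - 1 : ℕ)) (y := (n : ℝ))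
        (by norm_num) (by positivity) (by exact_mod_cast Nat.lt_of_lt_of_le Nat.zero_lt_one hn)).mpr hr
      calc ((Nat.clog 2 n - 1 : ℕ) : ℝ)
          = Real.logb 2 ((2 : ℝ) ^ (Nat.clog 2 n - 1 : ℕ)) := by
            rw [Real.logb_pow, Real.logb_self_eq_one (by norm_num)]
            ring
        _ ≤ Real.logb 2 n := hmono
    have hcast : ((Nat.clog 2 n : ℕ) : ℝ) = ((Nat.clog 2 n - 1 : ℕ) : ℝ) + 1 := by
      have : (Nat.clog 2 n - 1) + 1 = Nat.clog 2 n := by omega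
      rw [← this]
      push_cast
      ring
    rw [hcast]
    linarith

lemma final_bound (d M k : ℕ) :
    (Nat.clog 2 (Fintype.card (CodeT d M k)) : ℝ)
      ≤ 1 + Real.logb 2 ((M : ℝ) + 2)
        + M * (2 + 3 * Real.logb 2 ((M : ℝ) + 2) + 2 * Real.logb 2 ((d : ℝ) + 2) + k) := by
  haveI : Nonempty (CodeT d M k) := ⟨⟨0, fun _ => none⟩⟩
  have hpos : 1 ≤ Fintype.card (CodeT d M k) := Fintype.card_pos
  have h0 := clog_le_logb _ hpos
  set Q : ℕ := (M + 1) * ((M + d + 1) * ((M + d + 2) * 2 ^ k)) with hQ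
  have hcard : Fintype.card (CodeT d M k) = (M + 1) * (Q + 1) ^ M := card_CodeT d M k
  have hQpos : 0 < Q := by positivity
  have hlogcard : Real.logb 2 (Fintype.card (CodeT d M k))
      = Real.logb 2 ((M : ℝ) + 1) + M * Real.logb 2 ((Q : ℝ) + 1) := by
    rw [hcard]
    push_cast
    rw [Real.logb_mul (by positivity) (by positivity), Real.logb_pow]
  have hQle : ((Q : ℝ) + 1) ≤ 2 * ((M : ℝ) + 2) ^ 3 * ((d : ℝ) + 2) ^ 2 * 2 ^ k := by
    have e1 : M + 1 ≤ M + 2 := by omega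
    have e2 : M + d + 1 ≤ (M + 2) * (d + 2) := by nlinarith
    have e3 : M + d + 2 ≤ (M + 2) * (d + 2) := by nlinarith
    have h1 : Q + 1 ≤ 2 * (M + 2) ^ 3 * (d + 2) ^ 2 * 2 ^ k := by
      calc Q + 1 ≤ Q + Q := by omega
        _ = 2 * Q := by ring
        _ ≤ 2 * ((M + 2) * (((M + 2) * (d + 2)) * (((M + 2) * (d + 2)) * 2 ^ k))) := by
            apply Nat.mul_le_mul_left
            rw [hQ]
            exact Nat.mul_le_mul e1 (Nat.mul_le_mul e2 (Nat.mul_le_mul e3 le_rfl))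
        _ = 2 * (M + 2) ^ 3 * (d + 2) ^ 2 * 2 ^ k := by ring
    exact_mod_cast h1
  have hlogQ : Real.logb 2 ((Q : ℝ) + 1)
      ≤ 1 + 3 * Real.logb 2 ((M : ℝ) + 2) + 2 * Real.logb 2 ((d : ℝ) + 2) + k := by
    have hmono := (Real.logb_le_logb (b := 2) (by norm_num) (by positivity)
      (by positivity)).mpr hQle
    refine le_trans hmono (le_of_eq ?_)
    rw [Real.logb_mul (by positivity) (by positivity),
        Real.logb_mul (by positivity) (by positivity),
        Real.logb_mul (by positivity) (by positivity),
        Real.logb_pow, Real.logb_pow, Real.logb_pow,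
        Real.logb_self_eq_one (by norm_num)]
    ring
  have hM1 : Real.logb 2 ((M : ℝ) + 1) ≤ Real.logb 2 ((M : ℝ) + 2) :=
    (Real.logb_le_logb (b := 2) (by norm_num) (by positivity) (by positivity)).mpr
      (by linarith)
  have hMnn : (0 : ℝ) ≤ (M : ℝ) := Nat.cast_nonneg M
  calc (Nat.clog 2 (Fintype.card (CodeT d M k)) : ℝ)
      ≤ Real.logb 2 (Fintype.card (CodeT d M k)) + 1 := h0
    _ = Real.logb 2 ((M : ℝ) + 1) + M * Real.logb 2 ((Q : ℝ) + 1) + 1 := by rw [hlogcard]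
    _ ≤ Real.logb 2 ((M : ℝ) + 2)
        + M * (1 + 3 * Real.logb 2 ((M : ℝ) + 2) + 2 * Real.logb 2 ((d : ℝ) + 2) + k)
        + 1 := by
          have := mul_le_mul_of_nonneg_left hlogQ hMnn
          linarith
    _ ≤ 1 + Real.logb 2 ((M : ℝ) + 2)
        + M * (2 + 3 * Real.logb 2 ((M : ℝ) + 2) + 2 * Real.logb 2 ((d : ℝ) + 2) + k) := by
          nlinarith

set_option maxHeartbeats 1000000 in
/-- If the minimax code length of `𝒞` (w.r.t. the sup-norm on `(0,1)^d`)
satisfies `L_ε(𝒞) ≥ C₁ ε^{-γ}` for all `ε > 0`, then for each `C₀ > 0` there is `C > 0`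
such that for every coding scheme `𝓑` and every `ε ∈ (0, 1/2)`: if every `f ∈ 𝒞` can be
`ε`-approximated on `(0,1)^d` by a neural network with at most `M` nonzero weights, all
lying in the range of `B_{⌈C₀ log₂(1/ε)⌉}`, then `M ≥ C ε^{-γ} / log₂(1/ε)`. -/
theorem lower_bound_encodable_weights
    (d : ℕ) (hd : 0 < d) (ρ : ℝ → ℝ) (𝒞 : Set ((Fin d → ℝ) → ℝ))
    (γ C₁ : ℝ) (hγ : 0 < γ) (hC₁ : 0 < C₁)
    (hminimax : ∀ ε : ℝ, 0 < ε → ∀ ℓ : ℕ,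
      (∃ (E : ((Fin d → ℝ) → ℝ) → (Fin ℓ → Bool))
         (D : (Fin ℓ → Bool) → ((Fin d → ℝ) → ℝ)),
        ∀ f ∈ 𝒞, ∀ x ∈ unitCube d, |D (E f) x - f x| ≤ ε) →
      C₁ * ε ^ (-γ) ≤ (ℓ : ℝ)) :
    ∀ C₀ : ℝ, 0 < C₀ → ∃ C : ℝ, 0 < C ∧
      ∀ 𝓑 : (ℓ : ℕ) → (Fin ℓ → Bool) → ℝ,
      ∀ ε : ℝ, 0 < ε → ε < 1 / 2 →
      ∀ M : ℕ,
        (∀ f ∈ 𝒞, ∃ (Φ : NeuralNetwork d) (hout : Φ.dims (Φ.depth + 1) = 1),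
          Φ.numWeights ≤ M ∧
          Φ.weightsIn (Set.range (𝓑 ⌈C₀ * Real.logb 2 (1 / ε)⌉₊)) ∧
          ∀ x ∈ unitCube d, |Φ.realizeScalar ρ hout x - f x| ≤ ε) →
        C * ε ^ (-γ) / Real.logb 2 (1 / ε) ≤ (M : ℝ) := by
  intro C₀ hC₀
  classical
  have hδ1 : 1 ≤ Real.logb 2 ((d : ℝ) + 2) := by
    have h2 : Real.logb 2 2 ≤ Real.logb 2 ((d : ℝ) + 2) :=
      (Real.logb_le_logb (b := 2) (by norm_num) (by norm_num) (by positivity)).mpr (by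
        have : (0 : ℝ) ≤ d := Nat.cast_nonneg d
        linarith)
    rw [Real.logb_self_eq_one (by norm_num)] at h2
    exact h2
  have hA₀pos : 0 < 12 + 4 * γ + 2 * Real.logb 2 ((d : ℝ) + 2) + C₀ := by linarith
  refine ⟨min 1 (C₁ / (12 + 4 * γ + 2 * Real.logb 2 ((d : ℝ) + 2) + C₀)),
    lt_min one_pos (div_pos hC₁ hA₀pos), ?_⟩
  intro 𝓑 ε hε hε2 M hyp
  set k : ℕ := ⌈C₀ * Real.logb 2 (1 / ε)⌉₊ with hk
  have hinv : 2 < 1 / ε := by rw [lt_div_iff₀ hε]; linarith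
  have hL1 : 1 ≤ Real.logb 2 (1 / ε) := by
    have h2 : Real.logb 2 2 ≤ Real.logb 2 (1 / ε) :=
      (Real.logb_le_logb (b := 2) (by norm_num) (by norm_num) (by positivity)).mpr hinv.le
    rw [Real.logb_self_eq_one (by norm_num)] at h2
    exact h2
  have hLpos : 0 < Real.logb 2 (1 / ε) := by linarith
  have hXpos : 0 < ε ^ (-γ) := Real.rpow_pos_of_pos hε _
  have hX1 : 1 ≤ ε ^ (-γ) :=
    Real.one_le_rpow_of_pos_of_le_one_of_nonpos hε (by linarith) (by linarith)
  have hlogX : Real.logb 2 (ε ^ (-γ)) = γ * Real.logb 2 (1 / ε) := by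
    unfold Real.logb
    rw [Real.log_rpow hε, one_div, Real.log_inv]
    ring
  have hkL : (k : ℝ) ≤ C₀ * Real.logb 2 (1 / ε) + 1 := by
    have h1 := Nat.ceil_lt_add_one
      (show (0 : ℝ) ≤ C₀ * Real.logb 2 (1 / ε) from mul_nonneg hC₀.le (by linarith))
    rw [hk]
    linarith
  haveI hNE : Nonempty (CodeT d M k) := ⟨⟨0, fun _ => none⟩⟩
  have hTle : Fintype.card (CodeT d M k)
      ≤ Fintype.card (Fin (Nat.clog 2 (Fintype.card (CodeT d M k))) → Bool) := by
    rw [Fintype.card_fun, Fintype.card_bool, Fintype.card_fin]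
    exact Nat.le_pow_clog (by norm_num) _
  obtain ⟨emb⟩ := Function.Embedding.nonempty_of_card_le hTle
  have hkey : C₁ * ε ^ (-γ) ≤ ((Nat.clog 2 (Fintype.card (CodeT d M k))) : ℝ) := by
    apply hminimax ε hε
    refine ⟨fun g => if h : ∃ τ : CodeT d M k, ∀ x ∈ unitCube d,
        |decodeFun d M k ρ (𝓑 k) τ x - g x| ≤ ε then emb h.choose
      else emb (Classical.arbitrary _),
      fun bits => decodeFun d M k ρ (𝓑 k) (Function.invFun emb bits), ?_⟩
    intro f hf
    obtain ⟨Φ, hout, hMw, hwIn, happ⟩ := hyp f hf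
    obtain ⟨D, A, b, hDM, hmA, hmB, hcW, hreal⟩ :=
      prune_main ρ Φ M (Set.range (𝓑 k)) hout hMw hwIn
    obtain ⟨f0, hf0⟩ := decode_surj d M k (𝓑 k) A b hmA hmB hcW
    have hτex : ∃ τ : CodeT d M k, ∀ x ∈ unitCube d,
        |decodeFun d M k ρ (𝓑 k) τ x - f x| ≤ ε := by
      refine ⟨(⟨D, by omega⟩, f0), ?_⟩
      intro x hx
      have hdec : decodeFun d M k ρ (𝓑 k) (⟨D, by omega⟩, f0) x
          = Φ.realizeScalar ρ hout x := by
        have h1 : decodeFun d M k ρ (𝓑 k) (⟨D, by omega⟩, f0) x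
            = canonRealize d (M + d) ρ D (decodeA M (M + d) k (𝓑 k) f0)
                (decodeBvec M (M + d) k (𝓑 k) f0) x := rfl
        rw [h1, canonRealize_congr d (M + d) ρ D _ A _ b x
          (fun t ht => (decodeA_eq d M k (𝓑 k) A b f0 hf0 t (by omega)).1)
          (fun t ht => (decodeA_eq d M k (𝓑 k) A b f0 hf0 t (by omega)).2)]
        exact hreal x
      rw [hdec]
      exact happ x hx
    intro x hx
    beta_reduce
    rw [dif_pos hτex]
    rw [Function.leftInverse_invFun emb.injective hτex.choose]
    exact hτex.choose_spec x hx
  have hchain := le_trans hkey (final_bound d M k)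
  rcases Nat.eq_zero_or_pos M with rfl | hM1
  · exfalso
    have hcard1 : Fintype.card (CodeT d 0 k) = 1 := by
      rw [card_CodeT]
      norm_num
    rw [hcard1] at hkey
    simp [Nat.clog_one_right] at hkey
    nlinarith
  · by_cases hcase : ε ^ (-γ) ≤ (M : ℝ)
    · rw [div_le_iff₀ hLpos]
      calc min 1 (C₁ / (12 + 4 * γ + 2 * Real.logb 2 ((d : ℝ) + 2) + C₀)) * ε ^ (-γ)
          ≤ 1 * ε ^ (-γ) := mul_le_mul_of_nonneg_right (min_le_left _ _) hXpos.le
        _ = ε ^ (-γ) := one_mul _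
        _ ≤ ε ^ (-γ) * Real.logb 2 (1 / ε) := le_mul_of_one_le_right hXpos.le hL1
        _ ≤ (M : ℝ) * Real.logb 2 (1 / ε) :=
            mul_le_mul_of_nonneg_right hcase hLpos.le
    · push_neg at hcase
      clear hkey hTle hNE hyp hminimax emb
      have hM1' : (1 : ℝ) ≤ (M : ℝ) := by exact_mod_cast hM1
      have hMnn : (0 : ℝ) ≤ (M : ℝ) := by linarith
      have hβle : Real.logb 2 ((M : ℝ) + 2) ≤ 2 + γ * Real.logb 2 (1 / ε) := by
        have h1 : ((M : ℝ) + 2) ≤ 3 * ε ^ (-γ) := by nlinarith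
        have h2 : Real.logb 2 ((M : ℝ) + 2) ≤ Real.logb 2 (3 * ε ^ (-γ)) :=
          (Real.logb_le_logb (b := 2) (by norm_num) (by positivity) (by positivity)).mpr h1
        have h3 : Real.logb 2 (3 * ε ^ (-γ))
            = Real.logb 2 3 + γ * Real.logb 2 (1 / ε) := by
          rw [Real.logb_mul (by norm_num) (ne_of_gt hXpos), hlogX]
        have h4 : Real.logb 2 3 ≤ 2 := by
          have h5 : Real.logb 2 3 ≤ Real.logb 2 4 :=
            (Real.logb_le_logb (b := 2) (by norm_num) (by norm_num) (by norm_num)).mpr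
              (by norm_num)
          have h6 : Real.logb 2 4 = 2 := by
            rw [show (4 : ℝ) = 2 ^ (2 : ℕ) by norm_num, Real.logb_pow,
              Real.logb_self_eq_one (by norm_num)]
            norm_num
          linarith
        linarith
      have ha : 1 + Real.logb 2 ((M : ℝ) + 2)
          ≤ (3 + γ) * ((M : ℝ) * Real.logb 2 (1 / ε)) := by
        have h1 : 1 + Real.logb 2 ((M : ℝ) + 2)
            ≤ (3 + γ) * Real.logb 2 (1 / ε) := by nlinarith
        have h2 : Real.logb 2 (1 / ε) ≤ (M : ℝ) * Real.logb 2 (1 / ε) :=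
          le_mul_of_one_le_left hLpos.le hM1'
        nlinarith [mul_nonneg (show (0 : ℝ) ≤ 3 + γ by linarith)
          (sub_nonneg.mpr h2)]
      have hb1 : 2 + 3 * Real.logb 2 ((M : ℝ) + 2) + 2 * Real.logb 2 ((d : ℝ) + 2) + (k : ℝ)
          ≤ (9 + 3 * γ + 2 * Real.logb 2 ((d : ℝ) + 2) + C₀) * Real.logb 2 (1 / ε) := by
        nlinarith [mul_nonneg (show (0 : ℝ) ≤ 9 + 2 * Real.logb 2 ((d : ℝ) + 2) by linarith)
          (show (0 : ℝ) ≤ Real.logb 2 (1 / ε) - 1 by linarith)]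
      have hb2 := mul_le_mul_of_nonneg_left hb1 hMnn
      have hmaster : C₁ * ε ^ (-γ)
          ≤ (12 + 4 * γ + 2 * Real.logb 2 ((d : ℝ) + 2) + C₀)
            * ((M : ℝ) * Real.logb 2 (1 / ε)) := by nlinarith [hchain, ha, hb2]
      rw [div_le_iff₀ hLpos]
      calc min 1 (C₁ / (12 + 4 * γ + 2 * Real.logb 2 ((d : ℝ) + 2) + C₀)) * ε ^ (-γ)
          ≤ (C₁ / (12 + 4 * γ + 2 * Real.logb 2 ((d : ℝ) + 2) + C₀)) * ε ^ (-γ) :=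
            mul_le_mul_of_nonneg_right (min_le_right _ _) hXpos.le
        _ ≤ (M : ℝ) * Real.logb 2 (1 / ε) := by
            rw [div_mul_eq_mul_div, div_le_iff₀ hA₀pos]
            nlinarith [hmaster]
end

section
/- Let k ∈ {0,1,2} and let ρ : ℝ → ℝ be k-times continuously differentiable on ℝ and three times continuously differentiable in a neighborhood of some x₀ ∈ ℝ with ρ'(x₀) ≠ 0. Then for every B > 0 and every d ∈ ℕ there exists a constant C = C(B, ρ) > 0 such that for every L ∈ ℕ with L ≥ 2 and every ε ∈ (0,1) there is a neural network Φ with d-dimensional input and d-dimensional output satisfying: (i) for each component i = 1,…,d and each multi-index α with |α| ≤ k, sup_{x∈[−B,B]^d} |D^α([R_ρ(Φ)]_i − x_i)(x)| ≤ ε; (ii) max_i ‖[R_ρ(Φ)]_i‖_{W^{k,∞}([−B,B]^d)} ≤ C·max{1, B}; (iii) Φ has exactly L layers and M(Φ) ≤ 4dL − 3d; (iv) ‖Φ‖_max ≤ C·L·ε^{−1}. -/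
/-!
Near a point `x₀` with `ρ'(x₀) ≠ 0`, the zoomed-in activation
`φ_δ z = (ρ (x₀ + δ z) - ρ x₀) / (δ ρ'(x₀))` fixes `0` with slope `1` and has second derivative
`O(δ)`, so it is `O(δ)`-close to the identity in `C²` on `[-B-1, B+1]`. A network whose layers
are `ρ (x₀ + δ ·)` conjugated by affine maps computes `φ_δ^[L-1]` in every coordinate, and the
`C²` errors of `L - 1` such iterates add up to `O(L δ)`. Taking `δ ≍ ε / L` gives accuracy `ε`
at the price of weights of size `1 / δ ≍ L / ε`.
-/

open scoped BigOperators

open Metric Function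

theorem ContDiff.iterate {n : WithTop ℕ∞} {φ : ℝ → ℝ} (hφ : ContDiff ℝ n φ) (m : ℕ) :
    ContDiff ℝ n φ^[m] := by
  induction m with
  | zero => exact contDiff_id
  | succ m ih => rw [iterate_succ']; exact hφ.comp ih

theorem deriv_iterate_succ {φ : ℝ → ℝ} (hφ : Differentiable ℝ φ) (n : ℕ) :
    deriv φ^[n + 1] = fun y => deriv φ (φ^[n] y) * deriv φ^[n] y := by
  funext y
  rw [iterate_succ']
  exact deriv_comp y (hφ _) (hφ.iterate n y)

theorem deriv_deriv_iterate_succ {φ : ℝ → ℝ} (hφ : ContDiff ℝ 2 φ) (n : ℕ) (y : ℝ) :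
    deriv (deriv φ^[n + 1]) y = deriv (deriv φ) (φ^[n] y) * deriv φ^[n] y ^ 2
      + deriv φ (φ^[n] y) * deriv (deriv φ^[n]) y := by
  have hφ' : Differentiable ℝ (deriv φ) :=
    (contDiff_succ_iff_deriv.mp hφ).2.2.differentiable one_ne_zero
  have hφn' : Differentiable ℝ (deriv φ^[n]) :=
    (contDiff_succ_iff_deriv.mp (hφ.iterate n)).2.2.differentiable one_ne_zero
  have hφ1 : Differentiable ℝ φ := hφ.differentiable (by norm_num)
  rw [deriv_iterate_succ hφ1]
  have hcomp : HasDerivAt (fun y => deriv φ (φ^[n] y))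
      (deriv (deriv φ) (φ^[n] y) * deriv φ^[n] y) y :=
    (hφ' _).hasDerivAt.comp y (hφ1.iterate n y).hasDerivAt
  rw [(hcomp.fun_mul (hφn' y).hasDerivAt).deriv]
  ring

def NearIdOn (φ : ℝ → ℝ) (R s : ℝ) : Prop :=
  ∀ z, |z| ≤ R → |φ z - z| ≤ s ∧ |deriv φ z - 1| ≤ s ∧ |deriv (deriv φ) z| ≤ s

namespace NearIdOn

variable {φ : ℝ → ℝ} {B s : ℝ} {n : ℕ} {y : ℝ}

theorem abs_iterate_sub_le (h : NearIdOn φ (B + 1) s) (hs : 0 ≤ s) (hn : n * s ≤ 1)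
    (hy : |y| ≤ B) : |φ^[n] y - y| ≤ n * s := by
  induction n with
  | zero => simp
  | succ n ih =>
    push_cast at hn
    have ih := ih (by linarith)
    have hmem : |φ^[n] y| ≤ B + 1 := by
      linarith [abs_sub_abs_le_abs_sub (φ^[n] y) y]
    rw [iterate_succ_apply']
    calc |φ (φ^[n] y) - y| ≤ |φ (φ^[n] y) - φ^[n] y| + |φ^[n] y - y| := abs_sub_le _ _ _
      _ ≤ s + n * s := add_le_add (h _ hmem).1 ih
      _ = (n + 1 : ℕ) * s := by push_cast; ring

theorem abs_iterate_le (h : NearIdOn φ (B + 1) s) (hs : 0 ≤ s) (hn : n * s ≤ 1)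
    (hy : |y| ≤ B) : |φ^[n] y| ≤ B + 1 := by
  linarith [abs_sub_abs_le_abs_sub (φ^[n] y) y, h.abs_iterate_sub_le hs hn hy]

theorem abs_deriv_iterate_sub_one_le (h : NearIdOn φ (B + 1) s) (hφ : Differentiable ℝ φ)
    (hs : 0 ≤ s) (hn : n * s ≤ 1 / 30) (hy : |y| ≤ B) :
    |deriv φ^[n] y - 1| ≤ 3 * n * s := by
  induction n with
  | zero => simp
  | succ n ih =>
    push_cast at hn
    have ih := ih (by linarith)
    have hφn := (h _ (h.abs_iterate_le hs (by linarith) hy)).2.1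
    have hGd : |deriv φ^[n] y| ≤ 11 / 10 := by
      linarith [abs_sub_abs_le_abs_sub (deriv φ^[n] y) 1, abs_one (α := ℝ)]
    rw [deriv_iterate_succ hφ]
    calc |deriv φ (φ^[n] y) * deriv φ^[n] y - 1|
        = |(deriv φ (φ^[n] y) - 1) * deriv φ^[n] y + (deriv φ^[n] y - 1)| := by ring_nf
      _ ≤ |deriv φ (φ^[n] y) - 1| * |deriv φ^[n] y| + |deriv φ^[n] y - 1| := by
        rw [← abs_mul]; exact abs_add_le _ _
      _ ≤ s * (11 / 10) + 3 * n * s := by gcongr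
      _ ≤ 3 * (n + 1 : ℕ) * s := by push_cast; linarith

theorem abs_deriv_deriv_iterate_le (h : NearIdOn φ (B + 1) s) (hφ : ContDiff ℝ 2 φ)
    (hs : 0 ≤ s) (hn : n * s ≤ 1 / 30) (hy : |y| ≤ B) :
    |deriv (deriv φ^[n]) y| ≤ 12 * n * s := by
  have hφ1 : Differentiable ℝ φ := hφ.differentiable (by norm_num)
  induction n with
  | zero => simp
  | succ n ih =>
    push_cast at hn
    have ih := ih (by linarith)
    have hφn := h _ (h.abs_iterate_le hs (by linarith) hy)
    have hGd : |deriv φ^[n] y| ≤ 11 / 10 := by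
      linarith [abs_sub_abs_le_abs_sub (deriv φ^[n] y) 1, abs_one (α := ℝ),
        h.abs_deriv_iterate_sub_one_le (n := n) hφ1 hs (by linarith) hy]
    have hφd : |deriv φ (φ^[n] y)| ≤ 1 + s := by
      linarith [abs_sub_abs_le_abs_sub (deriv φ (φ^[n] y)) 1, hφn.2.1, abs_one (α := ℝ)]
    rw [deriv_deriv_iterate_succ hφ]
    calc |deriv (deriv φ) (φ^[n] y) * deriv φ^[n] y ^ 2
          + deriv φ (φ^[n] y) * deriv (deriv φ^[n]) y|
        ≤ |deriv (deriv φ) (φ^[n] y)| * |deriv φ^[n] y| ^ 2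
          + |deriv φ (φ^[n] y)| * |deriv (deriv φ^[n]) y| := by
          rw [← abs_pow, ← abs_mul, ← abs_mul]; exact abs_add_le _ _
      _ ≤ s * (11 / 10) ^ 2 + (1 + s) * (12 * n * s) := by gcongr; exact hφn.2.2
      _ ≤ 12 * (n + 1 : ℕ) * s := by push_cast; nlinarith

theorem abs_iteratedDeriv_iterate_sub_id_le (h : NearIdOn φ (B + 1) s) {k m : ℕ} (hk : k ≤ 2)
    (hφ : ContDiff ℝ k φ) (hm : m ≤ k) (hs : 0 ≤ s) (hn : n * s ≤ 1 / 30) (hy : |y| ≤ B) :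
    |iteratedDeriv m (fun t => φ^[n] t - t) y| ≤ 12 * n * s := by
  have hns : 0 ≤ (n : ℝ) * s := by positivity
  obtain hm2 : m ≤ 2 := hm.trans hk
  interval_cases m
  · simpa using (h.abs_iterate_sub_le hs (by linarith) hy).trans (by linarith)
  · have hφ1 : Differentiable ℝ φ := hφ.differentiable (by norm_cast; omega)
    rw [iteratedDeriv_one, deriv_fun_sub (hφ1.iterate n y) differentiableAt_fun_id, deriv_id'']
    linarith [h.abs_deriv_iterate_sub_one_le hφ1 hs hn hy]
  · obtain rfl : k = 2 := by omega
    have hφ2 : ContDiff ℝ 2 φ := hφ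
    have hφ1 : Differentiable ℝ φ := hφ2.differentiable (by norm_num)
    have hderiv : deriv (fun t => φ^[n] t - t) = fun t => deriv φ^[n] t - 1 := by
      funext t
      rw [deriv_fun_sub (hφ1.iterate n t) differentiableAt_fun_id, deriv_id'']
    rw [iteratedDeriv_succ, iteratedDeriv_one, hderiv, deriv_sub_const]
    exact h.abs_deriv_deriv_iterate_le hφ2 hs hn hy

theorem abs_iteratedDeriv_iterate_le (h : NearIdOn φ (B + 1) s) {k m : ℕ} (hk : k ≤ 2)
    (hφ : ContDiff ℝ k φ) (hm : m ≤ k) (hB : 0 ≤ B) (hs : 0 ≤ s) (hn : n * s ≤ 1 / 30)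
    (hy : |y| ≤ B) : |iteratedDeriv m φ^[n] y| ≤ B + 2 := by
  obtain hm2 : m ≤ 2 := hm.trans hk
  interval_cases m
  · simpa using (h.abs_iterate_le hs (by linarith) hy).trans (by linarith)
  · have hφ1 : Differentiable ℝ φ := hφ.differentiable (by norm_cast; omega)
    rw [iteratedDeriv_one]
    linarith [h.abs_deriv_iterate_sub_one_le hφ1 hs hn hy,
      abs_sub_abs_le_abs_sub (deriv φ^[n] y) 1, abs_one (α := ℝ)]
  · obtain rfl : k = 2 := by omega
    have hφ2 : ContDiff ℝ 2 φ := hφ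
    rw [iteratedDeriv_succ, iteratedDeriv_one]
    linarith [h.abs_deriv_deriv_iterate_le hφ2 hs hn hy]

end NearIdOn

theorem multiDeriv_comp_eval {d k : ℕ} {h : ℝ → ℝ} (hh : ContDiff ℝ k h) (i : Fin d)
    (u : List (Fin d)) (hu : u.length ≤ k) (x : Fin d → ℝ) :
    multiDeriv u (fun y => h (y i)) x =
      if ∀ j ∈ u, j = i then iteratedDeriv u.length h (x i) else 0 := by
  induction u generalizing x with
  | nil => simp [multiDeriv]
  | cons j u ih =>
    simp only [List.length_cons] at hu
    simp only [multiDeriv]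
    by_cases hall : ∀ j ∈ u, j = i
    · have hdiff : Differentiable ℝ (iteratedDeriv u.length h) :=
        hh.differentiable_iteratedDeriv u.length (by exact_mod_cast hu)
      have hchain : HasFDerivAt (multiDeriv u fun y => h (y i))
          (deriv (iteratedDeriv u.length h) (x i) •
            ContinuousLinearMap.proj (R := ℝ) (φ := fun _ : Fin d => ℝ) i) x := by
        rw [funext fun y => (ih (by omega) y).trans (if_pos hall)]
        exact (hdiff _).hasDerivAt.comp_hasFDerivAt x (hasFDerivAt_apply i x)
      rw [hchain.fderiv]
      by_cases hji : j = i
      · subst hji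
        have hcons : ∀ j' ∈ j :: u, j' = j := by simpa using hall
        rw [if_pos hcons]
        simp [iteratedDeriv_succ]
      · have hcons : ¬ ∀ j' ∈ j :: u, j' = i := fun h' => hji (h' j List.mem_cons_self)
        rw [if_neg hcons]
        simp [Ne.symm hji]
    · rw [funext fun y => (ih (by omega) y).trans (if_neg hall)]
      simp [hall]

theorem abs_multiDeriv_comp_eval_le {d k : ℕ} {h : ℝ → ℝ} (hh : ContDiff ℝ k h) {C : ℝ}
    (hC : 0 ≤ C) (i : Fin d) {u : List (Fin d)} (hu : u.length ≤ k) (x : Fin d → ℝ)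
    (hbound : ∀ m ≤ k, |iteratedDeriv m h (x i)| ≤ C) :
    |multiDeriv u (fun y => h (y i)) x| ≤ C := by
  rw [multiDeriv_comp_eval hh i u hu x]
  split_ifs
  · exact hbound _ hu
  · simpa using hC

theorem abs_sub_le_of_abs_deriv_le {g : ℝ → ℝ} {a C z : ℝ}
    (hg : ∀ t ∈ closedBall (0 : ℝ) a, DifferentiableAt ℝ g t)
    (hC : ∀ t ∈ closedBall (0 : ℝ) a, |deriv g t| ≤ C) (hz : z ∈ closedBall (0 : ℝ) a) :
    |g z - g 0| ≤ C * |z| := by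
  simpa using (convex_closedBall (0 : ℝ) a).norm_image_sub_le_of_norm_deriv_le hg hC
    (mem_closedBall_self (hz.out.trans' dist_nonneg)) hz

theorem abs_sub_sub_deriv_mul_le {f : ℝ → ℝ} {a S z : ℝ}
    (hf : ∀ t ∈ closedBall (0 : ℝ) a, DifferentiableAt ℝ f t)
    (hf' : ∀ t ∈ closedBall (0 : ℝ) a, DifferentiableAt ℝ (deriv f) t)
    (hS : ∀ t ∈ closedBall (0 : ℝ) a, |deriv (deriv f) t| ≤ S) (hz : z ∈ closedBall (0 : ℝ) a) :
    |f z - f 0 - deriv f 0 * z| ≤ S * z ^ 2 := by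
  have hsub : closedBall (0 : ℝ) |z| ⊆ closedBall 0 a :=
    closedBall_subset_closedBall (by simpa using hz)
  have hdiff : ∀ t ∈ closedBall (0 : ℝ) |z|,
      DifferentiableAt ℝ (fun t => f t - deriv f 0 * t) t := fun t ht =>
    (hf t (hsub ht)).sub (differentiableAt_fun_id.const_mul _)
  have hderiv : ∀ t ∈ closedBall (0 : ℝ) |z|,
      |deriv (fun t => f t - deriv f 0 * t) t| ≤ S * |z| := fun t ht => by
      rw [deriv_fun_sub (hf t (hsub ht)) (differentiableAt_fun_id.const_mul _),
        deriv_const_mul_field, deriv_id'', mul_one]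
      have ht' : |t| ≤ |z| := by simpa using ht
      have hS0 : 0 ≤ S := (abs_nonneg _).trans (hS 0 (hsub (mem_closedBall_self (abs_nonneg z))))
      calc |deriv f t - deriv f 0| ≤ S * |t| := abs_sub_le_of_abs_deriv_le hf' hS (hsub ht)
        _ ≤ S * |z| := by gcongr
  have hmain := abs_sub_le_of_abs_deriv_le hdiff hderiv (by simp : z ∈ closedBall (0 : ℝ) |z|)
  calc |f z - f 0 - deriv f 0 * z| = |f z - deriv f 0 * z - (f 0 - deriv f 0 * 0)| := by ring_nf
    _ ≤ S * |z| * |z| := hmain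
    _ = S * z ^ 2 := by rw [mul_assoc, abs_mul_abs_self, sq]

noncomputable def rescaledAct (ρ : ℝ → ℝ) (x₀ δ z : ℝ) : ℝ :=
  (ρ (x₀ + δ * z) - ρ x₀) / (δ * deriv ρ x₀)

section RescaledAct

variable {ρ : ℝ → ℝ} {x₀ δ : ℝ}

theorem deriv_comp_const_add_mul (f : ℝ → ℝ) (x₀ δ z : ℝ) :
    deriv (fun z => f (x₀ + δ * z)) z = δ * deriv f (x₀ + δ * z) := by
  have := deriv_comp_mul_left δ (fun t => f (x₀ + t)) z
  simp only [smul_eq_mul, deriv_comp_const_add] at this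
  exact this

theorem deriv_rescaledAct (hδ : δ ≠ 0) :
    deriv (rescaledAct ρ x₀ δ) = fun z => deriv ρ (x₀ + δ * z) / deriv ρ x₀ := by
  funext z
  unfold rescaledAct
  rw [deriv_div_const, deriv_sub_const, deriv_comp_const_add_mul]
  field_simp

theorem deriv_deriv_rescaledAct (hδ : δ ≠ 0) :
    deriv (deriv (rescaledAct ρ x₀ δ)) =
      fun z => δ * deriv (deriv ρ) (x₀ + δ * z) / deriv ρ x₀ := by
  funext z
  rw [deriv_rescaledAct hδ, deriv_div_const, deriv_comp_const_add_mul]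

theorem ContDiff.rescaledAct {n : WithTop ℕ∞} (hρ : ContDiff ℝ n ρ) :
    ContDiff ℝ n (rescaledAct ρ x₀ δ) :=
  ((hρ.comp (contDiff_const.add (contDiff_const.mul contDiff_id))).sub contDiff_const).div_const _

theorem rescaledAct_zero (δ : ℝ) : rescaledAct ρ x₀ δ 0 = 0 := by simp [rescaledAct]

theorem exists_nearIdOn_rescaledAct {U : Set ℝ} (hU : IsOpen U) (hx₀ : x₀ ∈ U)
    (hρ : ContDiffOn ℝ 2 ρ U) (hc : deriv ρ x₀ ≠ 0) {R : ℝ} (hR : 0 ≤ R) :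
    ∃ δ₀ > 0, ∃ K ≥ 0, ∀ δ, 0 < δ → δ ≤ δ₀ → NearIdOn (rescaledAct ρ x₀ δ) R (δ * K) := by
  obtain ⟨r, hr, hrU⟩ := nhds_basis_closedBall.mem_iff.mp (hU.mem_nhds hx₀)
  have hρ' : ContDiffOn ℝ 1 (deriv ρ) U := hρ.deriv_of_isOpen hU (by norm_num)
  have hρ'' : ContinuousOn (deriv (deriv ρ)) U :=
    (hρ'.deriv_of_isOpen hU (by norm_num) : ContDiffOn ℝ 0 _ _).continuousOn
  obtain ⟨M, hM⟩ := (isCompact_closedBall x₀ r).exists_bound_of_continuousOn (hρ''.mono hrU)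
  set c := deriv ρ x₀
  set M' := max M 0 / |c|
  refine ⟨r / (R + 1), by positivity, M' * (R + 1) ^ 2, by positivity,
    fun δ hδ hδr z hz => ?_⟩
  have hball : ∀ t ∈ closedBall (0 : ℝ) R, x₀ + δ * t ∈ closedBall x₀ r := fun t ht => by
    have ht : |t| ≤ R := by simpa using ht
    rw [mem_closedBall, dist_eq_norm, add_sub_cancel_left, norm_mul, Real.norm_eq_abs,
      Real.norm_eq_abs, abs_of_pos hδ]
    calc δ * |t| ≤ r / (R + 1) * (R + 1) := by gcongr; linarith
      _ = r := by field_simp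
  have hdiff : ∀ t ∈ closedBall (0 : ℝ) R, DifferentiableAt ℝ (rescaledAct ρ x₀ δ) t :=
    fun t ht => by
      have := (hρ.differentiableOn (by norm_num)).differentiableAt
        (hU.mem_nhds (hrU (hball t ht)))
      exact ((this.comp t (by fun_prop)).sub_const _).div_const _
  have hdiff' : ∀ t ∈ closedBall (0 : ℝ) R, DifferentiableAt ℝ (deriv (rescaledAct ρ x₀ δ)) t :=
    fun t ht => by
      have := (hρ'.differentiableOn (by norm_num)).differentiableAt
        (hU.mem_nhds (hrU (hball t ht)))
      rw [deriv_rescaledAct hδ.ne']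
      have haff : DifferentiableAt ℝ (fun z => x₀ + δ * z) t := by fun_prop
      exact (this.comp t haff).div_const _
  have hS : ∀ t ∈ closedBall (0 : ℝ) R, |deriv (deriv (rescaledAct ρ x₀ δ)) t| ≤ δ * M' :=
    fun t ht => by
      rw [deriv_deriv_rescaledAct hδ.ne', abs_div, abs_mul, abs_of_pos hδ, mul_div_assoc]
      gcongr
      exact div_le_div_of_nonneg_right ((hM _ (hball t ht)).trans (le_max_left _ _))
        (abs_nonneg _)
  have hz' : z ∈ closedBall (0 : ℝ) R := by simpa using hz
  have hderiv0 : deriv (rescaledAct ρ x₀ δ) 0 = 1 := by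
    rw [deriv_rescaledAct hδ.ne']; simp [c, hc]
  have hδM' : 0 ≤ δ * M' := by positivity
  have hR1 : 1 ≤ (R + 1) ^ 2 := by nlinarith
  have hz1 : |z| ≤ (R + 1) ^ 2 := by nlinarith
  have hz2 : z ^ 2 ≤ (R + 1) ^ 2 := by rw [← sq_abs]; gcongr; linarith
  refine ⟨?_, ?_, ?_⟩
  · have := abs_sub_sub_deriv_mul_le hdiff hdiff' hS hz'
    rw [rescaledAct_zero, hderiv0, sub_zero, one_mul] at this
    exact (this.trans (mul_le_mul_of_nonneg_left hz2 hδM')).trans_eq (mul_assoc _ _ _)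
  · have := abs_sub_le_of_abs_deriv_le hdiff' hS hz'
    rw [hderiv0] at this
    exact (this.trans (mul_le_mul_of_nonneg_left hz1 hδM')).trans_eq (mul_assoc _ _ _)
  · exact ((hS z hz').trans (le_mul_of_one_le_right hδM' hR1)).trans_eq (mul_assoc _ _ _)

end RescaledAct

namespace NeuralNetwork

noncomputable def diagonal (d n : ℕ) (w a : ℕ → ℝ) : NeuralNetwork d where
  depth := n
  dims _ := d
  dims0 := rfl
  A ℓ := Matrix.diagonal fun _ => w ℓ
  b ℓ _ := a ℓ

section Diagonal

variable {d n : ℕ} {w a : ℕ → ℝ} {ρ : ℝ → ℝ}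

theorem hidden_diagonal_zero (x : Fin d → ℝ) (i : Fin d) :
    (diagonal d n w a).hidden ρ x 0 i = x i := rfl

theorem hidden_diagonal_succ (x : Fin d → ℝ) (ℓ : ℕ) (i : Fin d) :
    (diagonal d n w a).hidden ρ x (ℓ + 1) i =
      ρ (w ℓ * (diagonal d n w a).hidden ρ x ℓ i + a ℓ) :=
  congrArg (fun t => ρ (t + a ℓ)) (Matrix.mulVec_diagonal _ _ i)

theorem realize_diagonal (x : Fin d → ℝ) (i : Fin d) :
    (diagonal d n w a).realize ρ x i = w n * (diagonal d n w a).hidden ρ x n i + a n :=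
  congrArg (· + a n) (Matrix.mulVec_diagonal _ _ i)

theorem numWeights_diagonal_le : (diagonal d n w a).numWeights ≤ 2 * d * (n + 1) := by
  have hA (ℓ : ℕ) : (Finset.univ.filter fun p : Fin d × Fin d =>
      (Matrix.diagonal fun _ => w ℓ) p.1 p.2 ≠ 0).card ≤ d := by
    refine (Finset.card_le_card fun p hp => ?_).trans
      ((Finset.card_image_le (s := Finset.univ) (f := fun i : Fin d => (i, i))).trans_eq
        (Finset.card_fin d))
    have hdiag : p.1 = p.2 := by
      by_contra hne
      exact (Finset.mem_filter.mp hp).2 (Matrix.diagonal_apply_ne _ hne)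
    exact Finset.mem_image.mpr ⟨p.1, Finset.mem_univ _, Prod.ext rfl hdiag⟩
  have hb (ℓ : ℕ) : (Finset.univ.filter fun _ : Fin d => a ℓ ≠ 0).card ≤ d :=
    (Finset.card_filter_le _ _).trans_eq (Finset.card_fin d)
  calc (diagonal d n w a).numWeights ≤ ∑ _ℓ ∈ Finset.range (n + 1), (d + d) :=
        Finset.sum_le_sum fun ℓ _ => add_le_add (hA ℓ) (hb ℓ)
    _ = 2 * d * (n + 1) := by simp; ring

theorem maxWeight_diagonal_le {W : ℝ} (hW : 0 ≤ W) (hw : ∀ ℓ ≤ n, |w ℓ| ≤ W)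
    (ha : ∀ ℓ ≤ n, |a ℓ| ≤ W) : (diagonal d n w a).maxWeight ≤ W := by
  refine Real.sSup_le ?_ hW
  rintro r ⟨ℓ, hℓ, ⟨i, j, rfl⟩ | ⟨i, rfl⟩⟩
  · by_cases hij : i = j
    · subst hij
      exact (congrArg abs (Matrix.diagonal_apply_eq _ i)).trans_le (hw ℓ (Nat.lt_succ_iff.mp hℓ))
    · exact (congrArg abs (Matrix.diagonal_apply_ne _ hij)).trans_le (by simpa using hW)
  · exact ha ℓ (Nat.lt_succ_iff.mp hℓ)

end Diagonal

end NeuralNetwork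

/-- Hidden layer `ℓ + 1` outputs `ρ (x₀ + δ * φ^[ℓ] xᵢ)` with `φ = rescaledAct ρ x₀ δ`; the affine
output layer undoes the last `ρ (x₀ + δ * ·)` up to one more application of `φ`. -/
noncomputable abbrev approxIdNet (ρ : ℝ → ℝ) (x₀ δ : ℝ) (d n : ℕ) : NeuralNetwork d :=
  NeuralNetwork.diagonal d n
    (fun ℓ => if ℓ = 0 then δ else if ℓ = n then (δ * deriv ρ x₀)⁻¹ else (deriv ρ x₀)⁻¹)
    (fun ℓ => if ℓ = 0 then x₀ else if ℓ = n then -(ρ x₀ / (δ * deriv ρ x₀))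
      else x₀ - ρ x₀ / deriv ρ x₀)

section ApproxIdNet

open NeuralNetwork

variable {ρ : ℝ → ℝ} {x₀ δ : ℝ} {d n : ℕ}

theorem mul_rescaledAct (hδ : δ ≠ 0) (z : ℝ) :
    δ * rescaledAct ρ x₀ δ z = (ρ (x₀ + δ * z) - ρ x₀) / deriv ρ x₀ := by
  unfold rescaledAct
  by_cases hc : deriv ρ x₀ = 0
  · simp [hc]
  · field_simp

theorem hidden_approxIdNet (hδ : δ ≠ 0) (x : Fin d → ℝ) (i : Fin d) {ℓ : ℕ} (hℓ : ℓ < n) :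
    (approxIdNet ρ x₀ δ d n).hidden ρ x (ℓ + 1) i =
      ρ (x₀ + δ * (rescaledAct ρ x₀ δ)^[ℓ] (x i)) := by
  induction ℓ with
  | zero => simp [approxIdNet, hidden_diagonal_succ, hidden_diagonal_zero, add_comm]
  | succ ℓ ih =>
    rw [hidden_diagonal_succ, ih (by omega), iterate_succ_apply',
      mul_rescaledAct hδ, if_neg (by omega), if_neg (by omega), if_neg (by omega),
      if_neg (by omega)]
    congr 1
    ring

theorem realize_approxIdNet (hδ : δ ≠ 0) (hn : 1 ≤ n) (x : Fin d → ℝ) (i : Fin d) :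
    (approxIdNet ρ x₀ δ d n).realize ρ x i = (rescaledAct ρ x₀ δ)^[n] (x i) := by
  obtain ⟨m, rfl⟩ : ∃ m, n = m + 1 := ⟨n - 1, by omega⟩
  rw [realize_diagonal, hidden_approxIdNet hδ x i (by omega),
    iterate_succ_apply', if_neg (by omega), if_pos rfl, if_neg (by omega), if_pos rfl]
  unfold rescaledAct
  ring

theorem maxWeight_approxIdNet_le (hδ : 0 < δ) (hδ1 : δ ≤ 1) :
    (approxIdNet ρ x₀ δ d n).maxWeight ≤ (1 + |x₀| + (1 + |ρ x₀|) / |deriv ρ x₀|) / δ := by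
  obtain ⟨W, hWdef⟩ : ∃ W, W = 1 + |x₀| + (1 + |ρ x₀|) / |deriv ρ x₀| := ⟨_, rfl⟩
  rw [← hWdef]
  have hc : 0 ≤ |deriv ρ x₀|⁻¹ := by positivity
  have hP : 0 ≤ |ρ x₀| / |deriv ρ x₀| := by positivity
  have hW : (1 + |ρ x₀|) / |deriv ρ x₀| = |deriv ρ x₀|⁻¹ + |ρ x₀| / |deriv ρ x₀| := by ring
  have hW_le : W ≤ W / δ := le_div_self (by rw [hWdef]; positivity) hδ hδ1
  have hmono : ∀ t, t ≤ W → t ≤ W / δ := fun t ht => ht.trans hW_le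
  have hscale : ∀ t, t ≤ W → t / δ ≤ W / δ := fun t ht => div_le_div_of_nonneg_right ht hδ.le
  refine maxWeight_diagonal_le (hW_le.trans' (by rw [hWdef]; positivity))
    (fun ℓ _ => ?_) (fun ℓ _ => ?_)
  · split_ifs
    · exact hmono _ (by rw [abs_of_pos hδ]; linarith [abs_nonneg x₀])
    · rw [abs_inv, abs_mul, abs_of_pos hδ, mul_inv, inv_mul_eq_div]
      exact hscale _ (by linarith [abs_nonneg x₀])
    · exact hmono _ (by rw [abs_inv]; linarith [abs_nonneg x₀])
  · split_ifs
    · exact hmono _ (by linarith [abs_nonneg x₀])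
    · rw [abs_neg, abs_div, abs_mul, abs_of_pos hδ, mul_comm, ← div_div]
      exact hscale _ (by linarith [abs_nonneg x₀])
    · refine hmono _ ((abs_sub _ _).trans ?_)
      rw [abs_div]
      linarith

theorem numWeights_approxIdNet_le (hn : 1 ≤ n) :
    (approxIdNet ρ x₀ δ d n).numWeights ≤ 4 * d * (n + 1) - 3 * d :=
  numWeights_diagonal_le.trans (Nat.le_sub_of_add_le (by nlinarith))

variable {k : ℕ} {B s : ℝ}

theorem abs_multiDeriv_realize_approxIdNet_sub_le (hk : k ≤ 2) (hρ : ContDiff ℝ k ρ)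
    (hδ : δ ≠ 0) (hn : 1 ≤ n) (hφ : NearIdOn (rescaledAct ρ x₀ δ) (B + 1) s) (hs : 0 ≤ s)
    (hns : n * s ≤ 1 / 30)
    (i : Fin d) {u : List (Fin d)} (hu : u.length ≤ k) {x : Fin d → ℝ} (hx : |x i| ≤ B) :
    |multiDeriv u (fun y => (approxIdNet ρ x₀ δ d n).realize ρ y i - y i) x| ≤ 12 * n * s := by
  simp only [realize_approxIdNet hδ hn]
  exact abs_multiDeriv_comp_eval_le (h := fun t => (rescaledAct ρ x₀ δ)^[n] t - t)
    ((hρ.rescaledAct.iterate n).sub contDiff_id) (by positivity) i hu x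
    fun m hm => hφ.abs_iteratedDeriv_iterate_sub_id_le hk hρ.rescaledAct hm hs hns hx

theorem abs_multiDeriv_realize_approxIdNet_le (hk : k ≤ 2) (hρ : ContDiff ℝ k ρ)
    (hδ : δ ≠ 0) (hn : 1 ≤ n) (hφ : NearIdOn (rescaledAct ρ x₀ δ) (B + 1) s) (hB : 0 ≤ B)
    (hs : 0 ≤ s) (hns : n * s ≤ 1 / 30)
    (i : Fin d) {u : List (Fin d)} (hu : u.length ≤ k) {x : Fin d → ℝ} (hx : |x i| ≤ B) :
    |multiDeriv u (fun y => (approxIdNet ρ x₀ δ d n).realize ρ y i) x| ≤ B + 2 := by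
  simp only [realize_approxIdNet hδ hn]
  exact abs_multiDeriv_comp_eval_le (hρ.rescaledAct.iterate n) (by positivity) i hu x
    fun m hm => hφ.abs_iteratedDeriv_iterate_le hk hρ.rescaledAct hm hB hs hns hx

end ApproxIdNet

theorem scale_bounds {K δ₀ D ε : ℝ} {L : ℕ} (hK : 0 ≤ K) (hδ₀ : 0 < δ₀)
    (hD : D = 30 * K + δ₀⁻¹ + 1) (hε : 0 < ε) (hε1 : ε ≤ 1) (hL : 1 ≤ L) :
    0 < ε / (D * L) ∧ ε / (D * L) ≤ 1 ∧ ε / (D * L) ≤ δ₀ ∧ L * (ε / (D * L) * K) ≤ ε / 30 := by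
  have hδ₀' : 0 < δ₀⁻¹ := inv_pos.mpr hδ₀
  have hD0 : 0 < D := by rw [hD]; positivity
  have hL0 : (1 : ℝ) ≤ L := by exact_mod_cast hL
  have hδ : ε / (D * L) ≤ D⁻¹ := by
    rw [div_le_iff₀ (by positivity), inv_mul_eq_div, le_div_iff₀ hD0]; nlinarith
  refine ⟨by positivity, hδ.trans (inv_le_one_of_one_le₀ (by linarith)), ?_, ?_⟩
  · exact hδ.trans ((inv_le_comm₀ hD0 hδ₀).mpr (by linarith))
  · rw [← mul_assoc, mul_div_assoc', mul_comm (L : ℝ) ε, mul_div_mul_right _ _ (by positivity),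
      div_mul_eq_mul_div, div_le_div_iff₀ hD0 (by norm_num)]
    nlinarith

/-- Approximate identity networks: for `k ∈ {0,1,2}` and suitable `ρ`,
for every `B > 0`, `d ∈ ℕ` there is `C > 0` such that for every `L ≥ 2` and `ε ∈ (0,1)`
there is a network with exactly `L` layers, `≤ 4dL - 3d` nonzero weights and
`‖Φ‖_max ≤ C L ε⁻¹`, approximating the identity on `[-B,B]^d` in `W^{k,∞}`. -/
theorem approximate_identity
    (k : ℕ) (hk : k ≤ 2) (ρ : ℝ → ℝ) (hρk : ContDiff ℝ (k : ℕ) ρ)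
    (x₀ : ℝ) (U : Set ℝ) (hUopen : IsOpen U) (hU : x₀ ∈ U)
    (hρ3 : ContDiffOn ℝ (3 : ℕ) ρ U) (hρ' : deriv ρ x₀ ≠ 0) :
    ∀ B : ℝ, 0 < B → ∀ d : ℕ, 0 < d → ∃ C : ℝ, 0 < C ∧
      ∀ L : ℕ, 2 ≤ L → ∀ ε : ℝ, 0 < ε → ε < 1 →
        ∃ (Φ : NeuralNetwork d) (hout : Φ.dims (Φ.depth + 1) = d),
          Φ.depth + 1 = L ∧
          Φ.numWeights ≤ 4 * d * L - 3 * d ∧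
          Φ.maxWeight ≤ C * L * ε⁻¹ ∧
          (∀ i : Fin d, ∀ u : List (Fin d), u.length ≤ k →
            ∀ x : Fin d → ℝ, (∀ l, x l ∈ Set.Icc (-B) B) →
              |multiDeriv u (fun y => Φ.realize ρ y (Fin.cast hout.symm i) - y i) x| ≤ ε) ∧
          (∀ i : Fin d, ∀ u : List (Fin d), u.length ≤ k →
            ∀ x : Fin d → ℝ, (∀ l, x l ∈ Set.Icc (-B) B) →
              |multiDeriv u (fun y => Φ.realize ρ y (Fin.cast hout.symm i)) x| ≤
                C * max 1 B) := by
  intro B hB d _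
  obtain ⟨δ₀, hδ₀, K, hK, hnear⟩ := exists_nearIdOn_rescaledAct hUopen hU
    (hρ3.of_le (by norm_num)) hρ' (by linarith : 0 ≤ B + 1)
  set W := 1 + |x₀| + (1 + |ρ x₀|) / |deriv ρ x₀|
  set D := 30 * K + δ₀⁻¹ + 1 with hD
  refine ⟨D * W + 3, by positivity, fun L hL ε hε hε1 => ?_⟩
  obtain ⟨hδ, hδ1, hδ₀', hLs⟩ := scale_bounds hK hδ₀ hD hε hε1.le (by omega : 1 ≤ L)
  set δ := ε / (D * L)
  have hn : 1 ≤ L - 1 := by omega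
  have hs : ((L - 1 : ℕ) : ℝ) * (δ * K) ≤ ε / 30 :=
    (mul_le_mul_of_nonneg_right (Nat.cast_le.mpr (Nat.sub_le L 1)) (by positivity)).trans hLs
  have hφ := hnear δ hδ hδ₀'
  have hmax : B + 2 ≤ (D * W + 3) * max 1 B := by
    have : 0 ≤ D * W * max 1 B := by positivity
    nlinarith [le_max_left 1 B, le_max_right 1 B]
  refine ⟨approxIdNet ρ x₀ δ d (L - 1), rfl, Nat.sub_add_cancel (by omega),
    (numWeights_approxIdNet_le hn).trans_eq (by rw [Nat.sub_add_cancel (by omega)]), ?_,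
    fun i u hu x hx => ?_, fun i u hu x hx => ?_⟩
  · calc (approxIdNet ρ x₀ δ d (L - 1)).maxWeight ≤ W / δ := maxWeight_approxIdNet_le hδ hδ1
      _ = D * W * L * ε⁻¹ := by simp only [δ]; field_simp
      _ ≤ (D * W + 3) * L * ε⁻¹ := by gcongr; linarith
  · exact (abs_multiDeriv_realize_approxIdNet_sub_le hk hρk hδ.ne' hn hφ (by positivity)
      (by linarith) i hu (abs_le.mpr (hx i))).trans (by linarith)
  · exact (abs_multiDeriv_realize_approxIdNet_le hk hρk hδ.ne' hn hφ hB.le (by positivity)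
      (by linarith) i hu (abs_le.mpr (hx i))).trans hmax
end

section
/- Let d, m ∈ ℕ, let k ∈ ℕ with k ≥ 3, let τ ∈ ℕ₀, μ > 0, N ≥ 1 and C₀ > 0. Let Ω₁ ⊆ ℝ^d and Ω₂ ⊆ ℝ^m be open, bounded and convex, let f : closure(Ω₁) → ℝ^m be k-times continuously differentiable with Range(f) ⊆ Ω₂, and let g : closure(Ω₂) → ℝ be k-times continuously differentiable. If |f|_{W^{l,∞}(Ω₁)} ≤ C₀·N^{l + μ·max{0, l−τ}} for all l = 1,…,k, then there is a constant C = C(d, m, k, C₀) > 0, independent of N, μ, f and g, such that |g ∘ f|_{W^{k,∞}(Ω₁)} ≤ C·(∑_{l=1}^k |g|_{W^{l,∞}(Ω₂)})·N^{k + μ·max{0, k−τ}}. -/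
/-!
Faà di Bruno's formula bounds `‖D^k (g ∘ f)‖` by `k! · C · D^k` as soon as `C` bounds the
derivatives of `g` of orders `1, …, k` and `D^l` bounds the `l`-th derivative of `f`. Partial
derivatives and operator norms of iterated derivatives agree up to factors `d^l`, so one may take
`C = m^k ∑ₗ |g|_{W^{l,∞}}` and `D = d · max C₀ 1 · N^q` with `q = (k + μ max{0, k - τ}) / k`:
the growth exponent `l + μ max{0, l - τ}` is at most `q · l` for `l ≤ k`, because
`max{0, l - τ} / l` increases with `l`. Then `D^k` is `N^{k + μ max{0, k - τ}}` times a constant.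
-/

open Set
open scoped Nat

section IteratedFDerivWithin

variable {𝕜 : Type*} [NontriviallyNormedField 𝕜] {E F G : Type*}
  [NormedAddCommGroup E] [NormedSpace 𝕜 E] [NormedAddCommGroup F] [NormedSpace 𝕜 F]
  [NormedAddCommGroup G] [NormedSpace 𝕜 G]

theorem norm_iteratedFDerivWithin_pi {ι : Type*} [Fintype ι] {f : E → ι → F} {s : Set E}
    {x : E} {n : ℕ} (hf : ContDiffWithinAt 𝕜 n f s x) (hs : UniqueDiffOn 𝕜 s) (hx : x ∈ s) :
    ‖iteratedFDerivWithin 𝕜 n f s x‖ =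
      ‖fun r => iteratedFDerivWithin 𝕜 n (fun y => f y r) s x‖ := by
  rw [← ContinuousMultilinearMap.opNorm_pi]
  congr 1
  ext v r
  exact congr($((ContinuousLinearMap.proj r).iteratedFDerivWithin_comp_left hf hs hx le_rfl) v).symm

theorem iteratedFDerivWithin_sub_const {f : E → F} {s : Set E} {x : E} {n : ℕ} (hn : n ≠ 0)
    (hf : ContDiffWithinAt 𝕜 n f s x) (hs : UniqueDiffOn 𝕜 s) (hx : x ∈ s) (c : F) :
    iteratedFDerivWithin 𝕜 n (fun y => f y - c) s x = iteratedFDerivWithin 𝕜 n f s x := by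
  rw [fun_iteratedFDerivWithin_sub_apply hf contDiffWithinAt_const hs hx,
    iteratedFDerivWithin_const_of_ne hn, Pi.zero_apply, sub_zero]

theorem norm_iteratedFDerivWithin_comp_le_of_ne_zero {g : F → G} {f : E → F} {n : ℕ}
    (hn : n ≠ 0) {s : Set E} {t : Set F} {x : E} (hg : ContDiffOn 𝕜 n g t)
    (hf : ContDiffOn 𝕜 n f s) (ht : UniqueDiffOn 𝕜 t) (hs : UniqueDiffOn 𝕜 s)
    (hst : MapsTo f s t) (hx : x ∈ s) {C D : ℝ} (hC₀ : 0 ≤ C)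
    (hC : ∀ i, 1 ≤ i → i ≤ n → ‖iteratedFDerivWithin 𝕜 i g t (f x)‖ ≤ C)
    (hD : ∀ i, 1 ≤ i → i ≤ n → ‖iteratedFDerivWithin 𝕜 i f s x‖ ≤ D ^ i) :
    ‖iteratedFDerivWithin 𝕜 n (g ∘ f) s x‖ ≤ n ! * C * D ^ n := by
  -- `norm_iteratedFDerivWithin_comp_le` also needs a bound on `g` itself, so recentre `g` at `f x`.
  set g₀ := fun y => g y - g (f x)
  have hg₀ : ∀ i ≤ n, ‖iteratedFDerivWithin 𝕜 i g₀ t (f x)‖ ≤ C := by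
    intro i hi
    rcases Nat.eq_zero_or_pos i with rfl | hi₀
    · simpa [g₀] using hC₀
    · rw [iteratedFDerivWithin_sub_const hi₀.ne' ((hg.of_le (by exact_mod_cast hi)) _ (hst hx))
        ht (hst hx)]
      exact hC i hi₀ hi
  have hg₀f := norm_iteratedFDerivWithin_comp_le (hg.sub contDiffOn_const) hf le_rfl ht hs hst hx
    hg₀ hD
  rwa [show g₀ ∘ f = fun y => (g ∘ f) y - g (f x) from rfl,
    iteratedFDerivWithin_sub_const hn (hg.comp hf hst x hx) hs hx] at hg₀f

end IteratedFDerivWithin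

theorem ContinuousMultilinearMap.norm_le_of_forall_apply_single_le {m n : ℕ} {F : Type*}
    [NormedAddCommGroup F] [NormedSpace ℝ F]
    (A : ContinuousMultilinearMap ℝ (fun _ : Fin n => Fin m → ℝ) F) {M : ℝ} (hM : 0 ≤ M)
    (hA : ∀ p : Fin n → Fin m, ‖A (fun j => Pi.single (p j) 1)‖ ≤ M) :
    ‖A‖ ≤ (m : ℝ) ^ n * M := by
  refine A.opNorm_le_bound (by positivity) fun v => ?_
  have hv : v = fun j => ∑ i, v j i • (Pi.single i 1 : Fin m → ℝ) := by
    ext j r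
    simp [Finset.sum_apply, Pi.single_apply]
  calc ‖A v‖ = ‖∑ p : Fin n → Fin m, (∏ j, v j (p j)) • A (fun j => Pi.single (p j) 1)‖ := by
        conv_lhs => rw [hv, A.map_sum]
        simp only [A.map_smul_univ]
    _ ≤ ∑ _p : Fin n → Fin m, (∏ j, ‖v j‖) * M := by
        refine (norm_sum_le _ _).trans (Finset.sum_le_sum fun p _ => ?_)
        rw [norm_smul, norm_prod]
        exact mul_le_mul (Finset.prod_le_prod (fun _ _ => norm_nonneg _)
          fun j _ => norm_le_pi_norm (v j) (p j)) (hA p) (norm_nonneg _) (by positivity)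
    _ = (m : ℝ) ^ n * M * ∏ j, ‖v j‖ := by
        simp only [Finset.sum_const, Finset.card_univ, Fintype.card_pi, Fintype.card_fin,
          Finset.prod_const, nsmul_eq_mul, Nat.cast_pow]
        ring

section MultiDeriv

variable {d : ℕ} {s : Set (Fin d → ℝ)} {x : Fin d → ℝ}

theorem multiDeriv_ofFn_eq_iteratedFDerivWithin (hs : IsOpen s) {h : (Fin d → ℝ) → ℝ} :
    ∀ {n : ℕ} (p : Fin n → Fin d), ContDiffOn ℝ n h s → ∀ x ∈ s,
      multiDeriv (List.ofFn p) h x = iteratedFDerivWithin ℝ n h s x (fun j => Pi.single (p j) 1)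
  | 0, _, _, _, _ => rfl
  | n + 1, p, hh, x, hx => by
    have hp : EqOn (multiDeriv (List.ofFn fun j => p j.succ) h)
        (fun y => iteratedFDeriv ℝ n h y (fun j => Pi.single (p j.succ) 1)) s := fun y hy => by
      rw [multiDeriv_ofFn_eq_iteratedFDerivWithin hs _ (hh.of_le (by simp)) y hy,
        iteratedFDerivWithin_of_isOpen n hs hy]
    have hdiff : DifferentiableAt ℝ (iteratedFDeriv ℝ n h) x :=
      (hh.contDiffAt (hs.mem_nhds hx)).differentiableAt_iteratedFDeriv
        (by exact_mod_cast n.lt_succ_self)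
    rw [List.ofFn_succ, iteratedFDerivWithin_of_isOpen _ hs hx]
    simp only [multiDeriv]
    rw [(hp.eventuallyEq_of_mem (hs.mem_nhds hx)).fderiv_eq,
      fderiv_continuousMultilinear_apply_const_apply hdiff]
    rfl

theorem abs_multiDeriv_le_norm_iteratedFDerivWithin (hs : IsOpen s) {h : (Fin d → ℝ) → ℝ}
    {u : List (Fin d)} (hh : ContDiffOn ℝ u.length h s) (hx : x ∈ s) :
    |multiDeriv u h x| ≤ ‖iteratedFDerivWithin ℝ u.length h s x‖ := by
  have hu := multiDeriv_ofFn_eq_iteratedFDerivWithin hs u.get hh x hx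
  rw [List.ofFn_get] at hu
  rw [hu, ← Real.norm_eq_abs]
  simpa [Pi.norm_single] using
    (iteratedFDerivWithin ℝ u.length h s x).le_opNorm fun j => Pi.single (u.get j) 1

theorem norm_iteratedFDerivWithin_le_of_abs_multiDeriv_le (hs : IsOpen s) {n : ℕ}
    {h : (Fin d → ℝ) → ℝ} (hh : ContDiffOn ℝ n h s) (hx : x ∈ s) {M : ℝ} (hM : 0 ≤ M)
    (hbound : ∀ u : List (Fin d), u.length = n → |multiDeriv u h x| ≤ M) :
    ‖iteratedFDerivWithin ℝ n h s x‖ ≤ (d : ℝ) ^ n * M := by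
  refine (iteratedFDerivWithin ℝ n h s x).norm_le_of_forall_apply_single_le hM fun p => ?_
  rw [Real.norm_eq_abs, ← multiDeriv_ofFn_eq_iteratedFDerivWithin hs p hh x hx]
  exact hbound _ List.length_ofFn

theorem norm_iteratedFDerivWithin_pi_le_of_abs_multiDeriv_le (hs : IsOpen s) {m n : ℕ}
    {f : (Fin d → ℝ) → Fin m → ℝ} (hf : ContDiffOn ℝ n f s) (hx : x ∈ s) {M : ℝ} (hM : 0 ≤ M)
    (hbound : ∀ r : Fin m, ∀ u : List (Fin d), u.length = n →
      |multiDeriv u (fun y => f y r) x| ≤ M) :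
    ‖iteratedFDerivWithin ℝ n f s x‖ ≤ (d : ℝ) ^ n * M := by
  rw [norm_iteratedFDerivWithin_pi (hf x hx) hs.uniqueDiffOn hx,
    pi_norm_le_iff_of_nonneg (by positivity)]
  exact fun r => norm_iteratedFDerivWithin_le_of_abs_multiDeriv_le hs (contDiffOn_pi.1 hf r) hx
    hM (hbound r)

theorem norm_iteratedFDerivWithin_le_pow_mul_sum_of_abs_multiDeriv_le (hs : IsOpen s) {k : ℕ}
    (hd : 0 < d) {h : (Fin d → ℝ) → ℝ} (hh : ContDiffOn ℝ k h s) (hx : x ∈ s) {M : ℕ → ℝ}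
    (hbound : ∀ l, 1 ≤ l → l ≤ k → ∀ u : List (Fin d), u.length = l → |multiDeriv u h x| ≤ M l)
    {i : ℕ} (hi₁ : 1 ≤ i) (hik : i ≤ k) :
    ‖iteratedFDerivWithin ℝ i h s x‖ ≤ (d : ℝ) ^ k * ∑ l ∈ Finset.Icc 1 k, M l := by
  have hM : ∀ l ∈ Finset.Icc 1 k, 0 ≤ M l := fun l hl => (abs_nonneg _).trans <|
    hbound l (Finset.mem_Icc.1 hl).1 (Finset.mem_Icc.1 hl).2 (List.replicate l ⟨0, hd⟩)
      List.length_replicate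
  have hi : i ∈ Finset.Icc 1 k := Finset.mem_Icc.2 ⟨hi₁, hik⟩
  refine (norm_iteratedFDerivWithin_le_of_abs_multiDeriv_le hs (hh.of_le (by exact_mod_cast hik))
    hx (hM i hi) (hbound i hi₁ hik)).trans ?_
  gcongr
  · exact hM i hi
  · exact_mod_cast hd
  · exact Finset.single_le_sum hM hi

end MultiDeriv

theorem mul_max_sub_le_of_le {i k τ : ℝ} (hi : 0 ≤ i) (hik : i ≤ k) (hτ : 0 ≤ τ) :
    k * max 0 (i - τ) ≤ i * max 0 (k - τ) := by
  rcases le_total i τ with h | h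
  · rw [max_eq_left (by linarith), mul_zero]
    positivity
  · rw [max_eq_right (by linarith), max_eq_right (by linarith)]
    nlinarith

theorem add_mul_max_sub_le_div_mul {i k τ μ : ℝ} (hi : 0 ≤ i) (hik : i ≤ k) (hτ : 0 ≤ τ)
    (hμ : 0 ≤ μ) : i + μ * max 0 (i - τ) ≤ (k + μ * max 0 (k - τ)) / k * i := by
  rcases hi.eq_or_lt with rfl | hi₀
  · simp [hτ]
  · rw [div_mul_eq_mul_div, le_div_iff₀ (hi₀.trans_le hik)]
    nlinarith [mul_le_mul_of_nonneg_left (mul_max_sub_le_of_le hi hik hτ) hμ]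

theorem mul_rpow_le_pow {C N e q : ℝ} {i : ℕ} (hi : i ≠ 0) (hN : 1 ≤ N) (he : e ≤ q * i) :
    C * N ^ e ≤ (max C 1 * N ^ q) ^ i := by
  rw [mul_pow, ← Real.rpow_natCast (N ^ q), ← Real.rpow_mul (by linarith)]
  gcongr
  exact (le_max_left C 1).trans (le_self_pow₀ (le_max_right C 1) hi)

/-- Chain-rule Sobolev seminorm estimate: if `f ∈ C^k(closure Ω₁; ℝ^m)`
maps into `Ω₂`, `g ∈ C^k(closure Ω₂)`, and `|f|_{W^{l,∞}(Ω₁)} ≤ C₀ N^{l+μ max{0,l-τ}}` for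
`l = 1,…,k`, then `|g∘f|_{W^{k,∞}(Ω₁)} ≤ C (∑_{l=1}^k |g|_{W^{l,∞}(Ω₂)}) N^{k+μ max{0,k-τ}}`
with `C = C(d,m,k,C₀)` independent of `N, μ, f, g`. The seminorms of `g` are encoded via
arbitrary upper bounds `Mg l`. -/
theorem chain_rule_seminorm_estimate
    (d m : ℕ) (hd : 0 < d) (hm : 0 < m) (k : ℕ) (hk : 3 ≤ k)
    (C₀ : ℝ) (hC₀ : 0 < C₀) :
    ∃ C : ℝ, 0 < C ∧
      ∀ (τ : ℕ) (μ N : ℝ), 0 < μ → 1 ≤ N →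
      ∀ (Ω₁ : Set (Fin d → ℝ)) (Ω₂ : Set (Fin m → ℝ)),
        IsOpen Ω₁ → Bornology.IsBounded Ω₁ → Convex ℝ Ω₁ →
        IsOpen Ω₂ → Bornology.IsBounded Ω₂ → Convex ℝ Ω₂ →
      ∀ (f : (Fin d → ℝ) → (Fin m → ℝ)) (g : (Fin m → ℝ) → ℝ),
        ContDiffOn ℝ (k : ℕ) f (closure Ω₁) →
        ContDiffOn ℝ (k : ℕ) g (closure Ω₂) →
        f '' closure Ω₁ ⊆ Ω₂ →
        (∀ l : ℕ, 1 ≤ l → l ≤ k → ∀ i : Fin m, ∀ u : List (Fin d), u.length = l →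
          ∀ x ∈ Ω₁, |multiDeriv u (fun y => f y i) x| ≤
            C₀ * N ^ ((l : ℝ) + μ * max 0 ((l : ℝ) - (τ : ℝ)))) →
        ∀ Mg : ℕ → ℝ,
          (∀ l : ℕ, 1 ≤ l → l ≤ k → ∀ u : List (Fin m), u.length = l →
            ∀ y ∈ Ω₂, |multiDeriv u g y| ≤ Mg l) →
          ∀ u : List (Fin d), u.length = k → ∀ x ∈ Ω₁,
            |multiDeriv u (g ∘ f) x| ≤
              C * (∑ l ∈ Finset.Icc 1 k, Mg l) *
                N ^ ((k : ℝ) + μ * max 0 ((k : ℝ) - (τ : ℝ))) := by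
  refine ⟨k ! * m ^ k * d ^ k * max C₀ 1 ^ k, by positivity, ?_⟩
  intro τ μ N hμ hN Ω₁ Ω₂ hΩ₁ _ _ hΩ₂ _ _ f g hf hg hfΩ₂ hfbound Mg hgbound u hu x hx
  have hf₁ : ContDiffOn ℝ k f Ω₁ := hf.mono subset_closure
  have hg₂ : ContDiffOn ℝ k g Ω₂ := hg.mono subset_closure
  have hmaps : MapsTo f Ω₁ Ω₂ := fun y hy => hfΩ₂ (mem_image_of_mem f (subset_closure hy))
  set q := ((k : ℝ) + μ * max 0 ((k : ℝ) - τ)) / k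
  have hgD : ∀ i, 1 ≤ i → i ≤ k →
      ‖iteratedFDerivWithin ℝ i g Ω₂ (f x)‖ ≤ m ^ k * ∑ l ∈ Finset.Icc 1 k, Mg l := fun _ =>
    norm_iteratedFDerivWithin_le_pow_mul_sum_of_abs_multiDeriv_le hΩ₂ hm hg₂ (hmaps hx)
      fun l hl₁ hlk v hv => hgbound l hl₁ hlk v hv _ (hmaps hx)
  have hfD : ∀ i, 1 ≤ i → i ≤ k →
      ‖iteratedFDerivWithin ℝ i f Ω₁ x‖ ≤ (d * max C₀ 1 * N ^ q) ^ i := fun i hi₁ hik => by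
    refine (norm_iteratedFDerivWithin_pi_le_of_abs_multiDeriv_le hΩ₁
      (hf₁.of_le (by exact_mod_cast hik)) hx (by positivity)
      fun r v hv => hfbound i hi₁ hik r v hv x hx).trans ?_
    rw [mul_assoc, mul_pow]
    gcongr
    exact mul_rpow_le_pow (by omega) hN
      (add_mul_max_sub_le_div_mul (by positivity) (by exact_mod_cast hik) (by positivity) hμ.le)
  calc |multiDeriv u (g ∘ f) x| ≤ ‖iteratedFDerivWithin ℝ k (g ∘ f) Ω₁ x‖ :=
        hu ▸ abs_multiDeriv_le_norm_iteratedFDerivWithin hΩ₁ (hu ▸ hg₂.comp hf₁ hmaps) hx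
    _ ≤ k ! * (m ^ k * ∑ l ∈ Finset.Icc 1 k, Mg l) * (d * max C₀ 1 * N ^ q) ^ k :=
        norm_iteratedFDerivWithin_comp_le_of_ne_zero (by omega) hg₂ hf₁ hΩ₂.uniqueDiffOn
          hΩ₁.uniqueDiffOn hmaps hx ((norm_nonneg _).trans (hgD 1 le_rfl (by omega))) hgD hfD
    _ = _ := by
        rw [mul_pow, mul_pow, ← Real.rpow_mul_natCast (by linarith),
          div_mul_cancel₀ _ (by exact_mod_cast (by omega : k ≠ 0))]
        ring
end

section
/- Let σ : ℝ → ℝ be the sigmoid function σ(x) = 1/(1 + e^{−x}). Then: (a) 0 < 1 − σ(x) ≤ e^{−x} for all x ≥ 0; (b) 0 < σ(x) ≤ e^{x} for all x ≤ 0; (c) for every k ∈ ℕ with k ≥ 1 there exists a constant C_k > 0 such that |σ^{(k)}(x)| ≤ C_k·e^{−|x|} for all x ∈ ℝ, where σ^{(k)} denotes the k-th derivative of σ. (These properties state that the sigmoid is exponential (j,0)-PU-admissible for every j ∈ ℕ₀.) -/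
noncomputable def sigmoid (x : ℝ) : ℝ := 1 / (1 + Real.exp (-x))

/-!
Parts (a) and (b) follow from `σ(-x) = 1 - σ(x)` and `σ(x) e^{-x} = σ(-x) < 1`. For (c),
`σ' = σ(1 - σ)` makes every derivative `σ^{(k+1)}` equal to `σ(1 - σ) · Q_k(σ)` for a polynomial
`Q_k`; since `σ` takes values in `[0, 1]`, `Q_k(σ)` is bounded, and
`σ(x)(1 - σ(x)) = σ(x) σ(-x) ≤ σ(-|x|) ≤ e^{-|x|}`.
-/

open Polynomial

theorem sigmoid_eq_real_sigmoid : sigmoid = Real.sigmoid := by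
  funext x
  rw [sigmoid, Real.sigmoid_def, one_div]

theorem exists_iteratedDeriv_succ_eq_eval_mul_eval {𝕜 : Type*} [NontriviallyNormedField 𝕜]
    {f : 𝕜 → 𝕜} {P : 𝕜[X]} (hf : ∀ x, HasDerivAt f (P.eval (f x)) x) (k : ℕ) :
    ∃ Q : 𝕜[X], iteratedDeriv (k + 1) f = fun x => P.eval (f x) * Q.eval (f x) := by
  induction k with
  | zero =>
    refine ⟨1, ?_⟩
    funext x
    rw [iteratedDeriv_one, (hf x).deriv, eval_one, mul_one]
  | succ k ih =>
    obtain ⟨Q, hQ⟩ := ih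
    refine ⟨derivative (P * Q), ?_⟩
    funext x
    have hPQ : iteratedDeriv (k + 1) f = fun x => (P * Q).eval (f x) := by
      simp only [hQ, eval_mul]
    rw [iteratedDeriv_succ, hPQ]
    exact (((P * Q).hasDerivAt (f x)).comp x (hf x)).deriv.trans (mul_comm _ _)

namespace Real

theorem sigmoid_lt_exp (x : ℝ) : sigmoid x < exp x := by
  have h : sigmoid x * exp (-x) < 1 := sigmoid_mul_rexp_neg x ▸ sigmoid_lt_one (-x)
  rwa [exp_neg, ← div_eq_mul_inv, div_lt_one (exp_pos x)] at h

theorem sigmoid_mul_one_sub_sigmoid_le_exp_neg_abs (x : ℝ) :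
    sigmoid x * (1 - sigmoid x) ≤ exp (-|x|) := by
  have h_even : sigmoid x * (1 - sigmoid x) = sigmoid |x| * sigmoid (-|x|) := by
    rcases abs_choice x with h | h
    · rw [h, sigmoid_neg]
    · rw [h, neg_neg, sigmoid_neg, mul_comm]
  calc sigmoid x * (1 - sigmoid x) = sigmoid |x| * sigmoid (-|x|) := h_even
    _ ≤ sigmoid (-|x|) := mul_le_of_le_one_left (sigmoid_nonneg _) (sigmoid_le_one _)
    _ ≤ exp (-|x|) := (sigmoid_lt_exp _).le

theorem exists_abs_iteratedDeriv_sigmoid_le {k : ℕ} (hk : 1 ≤ k) :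
    ∃ C : ℝ, 0 < C ∧ ∀ x : ℝ, |iteratedDeriv k sigmoid x| ≤ C * exp (-|x|) := by
  obtain ⟨k, rfl⟩ := Nat.exists_eq_add_of_le' hk
  obtain ⟨Q, hQ⟩ := exists_iteratedDeriv_succ_eq_eval_mul_eval (P := X * (1 - X))
    (by simpa using hasDerivAt_sigmoid) k
  obtain ⟨C, hC⟩ := isCompact_Icc.exists_bound_of_continuousOn
    (Q.continuous.continuousOn (s := Set.Icc (0 : ℝ) 1))
  refine ⟨max C 1, by positivity, fun x => ?_⟩
  have hQ_le : |Q.eval (sigmoid x)| ≤ max C 1 :=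
    (hC _ ⟨sigmoid_nonneg x, sigmoid_le_one x⟩).trans (le_max_left _ _)
  have h_nonneg : 0 ≤ sigmoid x * (1 - sigmoid x) :=
    mul_nonneg (sigmoid_nonneg x) (sub_nonneg.mpr (sigmoid_le_one x))
  simp only [hQ, eval_mul, eval_X, eval_sub, eval_one]
  rw [abs_mul, abs_of_nonneg h_nonneg, mul_comm]
  exact mul_le_mul hQ_le (sigmoid_mul_one_sub_sigmoid_le_exp_neg_abs x) h_nonneg (by positivity)

end Real

/-- The sigmoid is exponential `(j,0)`-PU-admissible for every `j`:
(a) `0 < 1 - σ(x) ≤ e^{-x}` for `x ≥ 0`; (b) `0 < σ(x) ≤ e^{x}` for `x ≤ 0`;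
(c) for every `k ≥ 1` there is `C_k > 0` with `|σ^{(k)}(x)| ≤ C_k e^{-|x|}` for all `x`. -/
theorem sigmoid_PU_admissible :
    (∀ x : ℝ, 0 ≤ x → 0 < 1 - sigmoid x ∧ 1 - sigmoid x ≤ Real.exp (-x)) ∧
    (∀ x : ℝ, x ≤ 0 → 0 < sigmoid x ∧ sigmoid x ≤ Real.exp x) ∧
    (∀ k : ℕ, 1 ≤ k → ∃ C : ℝ, 0 < C ∧
      ∀ x : ℝ, |iteratedDeriv k sigmoid x| ≤ C * Real.exp (-|x|)) := by
  rw [sigmoid_eq_real_sigmoid]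
  refine ⟨fun x _ => ?_, fun x _ => ⟨Real.sigmoid_pos x, (Real.sigmoid_lt_exp x).le⟩,
    fun k hk => Real.exists_abs_iteratedDeriv_sigmoid_le hk⟩
  rw [← Real.sigmoid_neg]
  exact ⟨Real.sigmoid_pos (-x), (Real.sigmoid_lt_exp (-x)).le⟩
end

section
/- Let σ(x) = 1/(1+e^{−x}), and for s ≥ 1 define ψ^s : ℝ → ℝ by ψ^s(x) = σ(s(x + 3/2)) − σ(s(x − 3/2)); for N ∈ ℕ, d ∈ ℕ and m ∈ {0,…,N}^d define φ^s_m : ℝ^d → ℝ by φ^s_m(x) = ∏_{l=1}^d ψ^s(3N(x_l − m_l/N)). Then for every d ∈ ℕ and k ∈ ℕ₀ there exists a constant C = C(k, d) > 0 such that for all N ∈ ℕ, all s ≥ 1, all m ∈ {0,…,N}^d, every multi-index α with |α| ≤ k and every x ∈ ℝ^d, |D^α φ^s_m(x)| ≤ C·N^k·s^k. -/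
noncomputable def psiSig (s x : ℝ) : ℝ :=
  sigmoid (s * (x + 3 / 2)) - sigmoid (s * (x - 3 / 2))

noncomputable def bump (d N : ℕ) (s : ℝ) (m : Fin d → ℕ) (x : Fin d → ℝ) : ℝ :=
  ∏ l : Fin d, psiSig s (3 * (N : ℝ) * (x l - (m l : ℝ) / (N : ℝ)))

/-! The bump is a tensor product, so a mixed partial derivative `D^α φ` is the product of the
one-dimensional derivatives of its factors. Each factor is `ψ^s` composed with an affine map of
slope `3N`, and `ψ^s` is a difference of two sigmoids rescaled by `s`, so its `n`-th derivative is
`(3Ns)^n` times a difference of two values of `σ⁽ⁿ⁾`. Finally `σ' = σ(1 - σ)` makes `σ⁽ⁿ⁾` a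
polynomial in `σ`, which takes values in `[0, 1]`, so `σ⁽ⁿ⁾` is bounded. -/

open Polynomial Finset
open scoped ContDiff

theorem exists_polynomial_iteratedDeriv_sigmoid (n : ℕ) :
    ∃ p : ℝ[X], iteratedDeriv n Real.sigmoid = fun x => p.eval (Real.sigmoid x) := by
  induction n with
  | zero => exact ⟨X, by simp⟩
  | succ n ih =>
    obtain ⟨p, hp⟩ := ih
    refine ⟨derivative p * (X - X ^ 2), funext fun x => ?_⟩
    rw [iteratedDeriv_succ, hp]
    refine ((p.hasDerivAt _).comp x (Real.hasDerivAt_sigmoid x)).deriv.trans ?_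
    simp only [eval_mul, eval_sub, eval_X, eval_pow]
    ring

theorem exists_abs_iteratedDeriv_sigmoid_le (n : ℕ) :
    ∃ B, ∀ x, |iteratedDeriv n Real.sigmoid x| ≤ B := by
  obtain ⟨p, hp⟩ := exists_polynomial_iteratedDeriv_sigmoid n
  obtain ⟨B, hB⟩ := isCompact_Icc.exists_bound_of_continuousOn
    (p.continuous.continuousOn (s := Set.Icc (0 : ℝ) 1))
  exact ⟨B, fun x => hp ▸ hB _ ⟨Real.sigmoid_nonneg x, Real.sigmoid_le_one x⟩⟩

theorem exists_pos_forall_abs_iteratedDeriv_sigmoid_le (k : ℕ) :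
    ∃ B, 0 < B ∧ ∀ n ≤ k, ∀ x, |iteratedDeriv n Real.sigmoid x| ≤ B := by
  choose B hB using exists_abs_iteratedDeriv_sigmoid_le
  obtain ⟨M, hM⟩ := ((range (k + 1)).image B).exists_le
  refine ⟨max M 1, by positivity, fun n hn x => (hB n x).trans (le_max_of_le_left ?_)⟩
  exact hM _ (mem_image_of_mem B (mem_range.2 (Nat.lt_succ_of_le hn)))

section Affine

variable {𝕜 : Type*} [NontriviallyNormedField 𝕜] {f : 𝕜 → 𝕜} {n : ℕ}

theorem iteratedDeriv_comp_mul_add (hf : ContDiff 𝕜 n f) (a b : 𝕜) :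
    iteratedDeriv n (fun x => f (a * (x + b))) =
      fun x => a ^ n * iteratedDeriv n f (a * (x + b)) := by
  rw [iteratedDeriv_comp_add_const (f := fun y => f (a * y)), iteratedDeriv_comp_const_mul hf]

theorem iteratedDeriv_comp_mul_sub (hf : ContDiff 𝕜 n f) (a b : 𝕜) :
    iteratedDeriv n (fun x => f (a * (x - b))) =
      fun x => a ^ n * iteratedDeriv n f (a * (x - b)) := by
  simpa only [← sub_eq_add_neg] using iteratedDeriv_comp_mul_add hf a (-b)

end Affine

theorem psiSig_eq (s : ℝ) :
    psiSig s = fun x => Real.sigmoid (s * (x + 3 / 2)) - Real.sigmoid (s * (x - 3 / 2)) := by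
  funext x
  simp only [psiSig, sigmoid, one_div, Real.sigmoid_def]

theorem contDiff_psiSig (s : ℝ) : ContDiff ℝ ∞ (psiSig s) := by
  rw [psiSig_eq]
  exact (contDiff_sigmoid.of_le le_top).comp (by fun_prop) |>.sub <|
    (contDiff_sigmoid.of_le le_top).comp (by fun_prop)

theorem iteratedDeriv_psiSig (s : ℝ) (n : ℕ) (x : ℝ) :
    iteratedDeriv n (psiSig s) x = s ^ n * (iteratedDeriv n Real.sigmoid (s * (x + 3 / 2)) -
      iteratedDeriv n Real.sigmoid (s * (x - 3 / 2))) := by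
  have hσ : ContDiff ℝ n Real.sigmoid := contDiff_sigmoid.of_le (by exact_mod_cast le_top)
  rw [psiSig_eq, iteratedDeriv_fun_sub, iteratedDeriv_comp_mul_add hσ,
    iteratedDeriv_comp_mul_sub hσ, mul_sub]
  all_goals exact (hσ.comp (by fun_prop)).contDiffAt

theorem abs_iteratedDeriv_psiSig_le {s B : ℝ} {n : ℕ} (hs : 0 ≤ s)
    (hB : ∀ x, |iteratedDeriv n Real.sigmoid x| ≤ B) (x : ℝ) :
    |iteratedDeriv n (psiSig s) x| ≤ 2 * B * s ^ n := by
  rw [iteratedDeriv_psiSig, abs_mul, abs_pow, abs_of_nonneg hs, mul_comm]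
  gcongr
  linarith [abs_sub (iteratedDeriv n Real.sigmoid (s * (x + 3 / 2)))
    (iteratedDeriv n Real.sigmoid (s * (x - 3 / 2))), hB (s * (x + 3 / 2)), hB (s * (x - 3 / 2))]

theorem abs_iteratedDeriv_psiSig_comp_le {s a B : ℝ} {n : ℕ} (hs : 0 ≤ s) (ha : 0 ≤ a)
    (hB : ∀ x, |iteratedDeriv n Real.sigmoid x| ≤ B) (c t : ℝ) :
    |iteratedDeriv n (fun t => psiSig s (a * (t - c))) t| ≤ 2 * B * (a * s) ^ n := by
  rw [iteratedDeriv_comp_mul_sub ((contDiff_psiSig s).of_le (by exact_mod_cast le_top)),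
    abs_mul, abs_pow, abs_of_nonneg ha, mul_pow, mul_left_comm]
  gcongr
  exact abs_iteratedDeriv_psiSig_le hs hB _

theorem fderiv_prod_apply_single {ι : Type*} [Fintype ι] [DecidableEq ι] {F : ι → ℝ → ℝ}
    (hF : ∀ l, Differentiable ℝ (F l)) (x : ι → ℝ) (i : ι) :
    fderiv ℝ (fun y => ∏ l, F l (y l)) x (Pi.single i 1) =
      ∏ l, Function.update F i (deriv (F i)) l (x l) := by
  have hF' (l : ι) : HasFDerivAt (fun y : ι → ℝ => F l (y l))
      (deriv (F l) (x l) • ContinuousLinearMap.proj (R := ℝ) (φ := fun _ => ℝ) l) x :=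
    (hF l (x l)).hasDerivAt.comp_hasFDerivAt x (hasFDerivAt_apply l x)
  have hprod := HasFDerivAt.finsetProd (u := univ) fun l _ => hF' l
  rw [hprod.fderiv, ← mul_prod_erase univ _ (mem_univ i), Function.update_self, mul_comm]
  simp only [_root_.sum_apply, smul_apply, ContinuousLinearMap.proj_apply, Pi.single_apply,
    smul_eq_mul, mul_ite, mul_one, mul_zero, sum_ite_eq', mem_univ, ↓reduceIte]
  congr 1
  exact prod_congr rfl fun l hl => by rw [Function.update_of_ne (ne_of_mem_erase hl)]

theorem multiDeriv_prod {d : ℕ} {h : Fin d → ℝ → ℝ} (hh : ∀ l, ContDiff ℝ ∞ (h l))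
    (u : List (Fin d)) :
    multiDeriv u (fun y => ∏ l, h l (y l)) =
      fun x => ∏ l, iteratedDeriv (u.count l) (h l) (x l) := by
  induction u with
  | nil => rfl
  | cons i u ih =>
    funext x
    have hcount : Function.update (fun l => iteratedDeriv (u.count l) (h l)) i
        (deriv (iteratedDeriv (u.count i) (h i))) =
        fun l => iteratedDeriv ((i :: u).count l) (h l) := by
      funext l
      rcases eq_or_ne l i with rfl | hl
      · simp [iteratedDeriv_succ]
      · simp [Function.update_of_ne hl, Ne.symm hl]
    rw [multiDeriv, ih]
    beta_reduce
    rw [fderiv_prod_apply_single (fun l => ?_), hcount]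
    exact (hh l).differentiable_iteratedDeriv _ (by exact_mod_cast WithTop.coe_lt_top _)

theorem List.sum_count_eq_length {ι : Type*} [Fintype ι] [DecidableEq ι] (u : List ι) :
    ∑ l, u.count l = u.length := by
  simpa using Multiset.sum_count_eq_card (s := univ) (m := (u : Multiset ι)) fun a _ =>
    mem_univ a

theorem abs_multiDeriv_prod_le {d k : ℕ} {h : Fin d → ℝ → ℝ} (hh : ∀ l, ContDiff ℝ ∞ (h l))
    {A L : ℝ} (hA : 0 ≤ A) (hL : 1 ≤ L)
    (hbound : ∀ l, ∀ n ≤ k, ∀ t, |iteratedDeriv n (h l) t| ≤ A * L ^ n)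
    {u : List (Fin d)} (hu : u.length ≤ k) (x : Fin d → ℝ) :
    |multiDeriv u (fun y => ∏ l, h l (y l)) x| ≤ A ^ d * L ^ k := by
  rw [multiDeriv_prod hh, abs_prod]
  calc ∏ l, |iteratedDeriv (u.count l) (h l) (x l)|
      ≤ ∏ l, A * L ^ u.count l :=
        prod_le_prod (fun l _ => abs_nonneg _)
          fun l _ => hbound l _ (List.count_le_length.trans hu) _
    _ = A ^ d * L ^ u.length := by
        rw [prod_mul_distrib, prod_const, prod_pow_eq_pow_sum, u.sum_count_eq_length, card_univ,
          Fintype.card_fin]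
    _ ≤ A ^ d * L ^ k := by gcongr

theorem bump_derivative_bound_general (d : ℕ) (k : ℕ) :
    ∃ C : ℝ, 0 < C ∧
      ∀ N : ℕ, 1 ≤ N → ∀ s : ℝ, 1 ≤ s → ∀ m : Fin d → ℕ, (∀ l, m l ≤ N) →
        ∀ u : List (Fin d), u.length ≤ k → ∀ x : Fin d → ℝ,
          |multiDeriv u (bump d N s m) x| ≤ C * (N : ℝ) ^ k * s ^ k := by
  obtain ⟨B, hB0, hB⟩ := exists_pos_forall_abs_iteratedDeriv_sigmoid_le k
  refine ⟨(2 * B) ^ d * 3 ^ k, by positivity, fun N hN s hs m _ u hu x => ?_⟩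
  have hN' : (1 : ℝ) ≤ N := by exact_mod_cast hN
  have hNs : 1 ≤ 3 * (N : ℝ) * s := by nlinarith
  calc |multiDeriv u (bump d N s m) x| ≤ (2 * B) ^ d * (3 * N * s) ^ k :=
        abs_multiDeriv_prod_le (fun l => (contDiff_psiSig s).comp (by fun_prop))
          (by positivity) hNs (fun l n hn t => abs_iteratedDeriv_psiSig_comp_le
            (by positivity) (by positivity) (hB n hn) _ t) hu x
    _ = (2 * B) ^ d * 3 ^ k * N ^ k * s ^ k := by ring

/-- Derivative bounds for the sigmoid bump functions: for every `d` and
`k` there is `C = C(k,d) > 0` such that for all `N ≥ 1`, `s ≥ 1`, `m ∈ {0,…,N}^d`, every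
multi-index `α` with `|α| ≤ k` (a list of directions of length `≤ k`) and every `x ∈ ℝ^d`,
`|D^α φ^s_m(x)| ≤ C N^k s^k`. -/
theorem bump_derivative_bound (d : ℕ) (hd : 0 < d) (k : ℕ) :
    ∃ C : ℝ, 0 < C ∧
      ∀ N : ℕ, 1 ≤ N → ∀ s : ℝ, 1 ≤ s → ∀ m : Fin d → ℕ, (∀ l, m l ≤ N) →
        ∀ u : List (Fin d), u.length ≤ k → ∀ x : Fin d → ℝ,
          |multiDeriv u (bump d N s m) x| ≤ C * (N : ℝ) ^ k * s ^ k :=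
  bump_derivative_bound_general d k
end
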